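/- arXiv:2005.09798 — 6 statements merged into one kernel-verified Lean document; each statement's English description precedes it below -/
import Mathlib

section
/- For every odd prime p, the wreath product Z_p ≀ Z_p (the semidirect product Z_p ⋉ (Z_p)^p where Z_p acts on (Z_p)^p by cyclically permuting the coordinates) is not GRR-detecting, and consequently it is also not DRR-detecting. -/
/-! Common definitions: Cayley digraphs, digraph automorphism groups,
DRRs/GRRs, detecting groups, the regular representation, the group `W(G,N)`,
wreath and cartesian products of digraphs, and the wreath product of groups. -/

universe u

/-- The adjacency relation of the Cayley digraph `Cay(G,S)`:
there is a directed edge from `g₁` to `g₂` iff `g₂ = s * g₁` for some `s ∈ S`. -/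
def cayAdj {G : Type*} [Group G] (S : Set G) : G → G → Prop :=
  fun g₁ g₂ => ∃ s ∈ S, g₂ = s * g₁

/-- The automorphism group of a digraph (given by its adjacency relation),
as a subgroup of the symmetric group on the vertices. -/
def digraphAut {V : Type*} (Adj : V → V → Prop) : Subgroup (Equiv.Perm V) where
  carrier := {σ | ∀ x y, Adj (σ x) (σ y) ↔ Adj x y}
  one_mem' := fun _ _ => Iff.rfl
  mul_mem' := by
    intro σ τ hσ hτ x y
    simp only [Equiv.Perm.mul_apply]
    exact (hσ _ _).trans (hτ _ _)
  inv_mem' := by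
    intro σ hσ x y
    have h := (hσ (σ⁻¹ x) (σ⁻¹ y)).symm
    simpa using h

/-- A digraph is a DRR (digraphical regular representation) of the group `G` if its
automorphism group is isomorphic to `G` and acts regularly on the vertex set. -/
def IsDRR (G : Type*) [Group G] {V : Type*} (Adj : V → V → Prop) : Prop :=
  Nonempty (digraphAut Adj ≃* G) ∧
    ∀ v w : V, ∃! σ : digraphAut Adj, (σ : Equiv.Perm V) v = w

/-- A GRR (graphical regular representation) of `G` is a DRR that is a graph. -/
def IsGRR (G : Type*) [Group G] {V : Type*} (Adj : V → V → Prop) : Prop :=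
  Symmetric Adj ∧ IsDRR G Adj

/-- `Aut(G,S)` is trivial: the only group automorphism `φ` of `G` with `φ(S) = S`
is the identity. -/
def AutGSTrivial {G : Type*} [Group G] (S : Set G) : Prop :=
  ∀ φ : MulAut G, ⇑φ '' S = S → φ = 1

/-- `G` is DRR-detecting: for every `S ⊆ G`, if `Aut(G,S) = 1` then
`Cay(G,S)` is a DRR of `G`. -/
def DRRDetecting (G : Type*) [Group G] : Prop :=
  ∀ S : Set G, AutGSTrivial S → IsDRR G (cayAdj S)

/-- `G` is GRR-detecting: for every inverse-closed `S ⊆ G`, if `Aut(G,S) = 1` then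
`Cay(G,S)` is a GRR of `G`. -/
def GRRDetecting (G : Type*) [Group G] : Prop :=
  ∀ S : Set G, (∀ s ∈ S, s⁻¹ ∈ S) → AutGSTrivial S → IsGRR G (cayAdj S)

/-- `G` admits a DRR (equivalently, some Cayley digraph of `G` is a DRR). -/
def HasDRR (G : Type*) [Group G] : Prop :=
  ∃ S : Set G, IsDRR G (cayAdj S)

/-- `G` admits a GRR (equivalently, some Cayley graph of `G` is a GRR). -/
def HasGRR (G : Type*) [Group G] : Prop :=
  ∃ S : Set G, (∀ s ∈ S, s⁻¹ ∈ S) ∧ IsGRR G (cayAdj S)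

/-- The right regular representation `Ĝ = {x ↦ x·g : g ∈ G}` of `G`,
as a subgroup of the symmetric group on `G`. -/
def regularRep (G : Type*) [Group G] : Subgroup (Equiv.Perm G) where
  carrier := {σ | ∃ g : G, ∀ x, σ x = x * g}
  one_mem' := ⟨1, fun x => (mul_one x).symm⟩
  mul_mem' := by
    rintro σ τ ⟨g, hg⟩ ⟨h, hh⟩
    exact ⟨h * g, fun x => by
      simp only [Equiv.Perm.mul_apply, hg, hh, mul_assoc]⟩
  inv_mem' := by
    rintro σ ⟨g, hg⟩
    refine ⟨g⁻¹, fun x => ?_⟩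
    have h1 : σ (x * g⁻¹) = x := by rw [hg]; group
    calc σ⁻¹ x = σ⁻¹ (σ (x * g⁻¹)) := by rw [h1]
      _ = x * g⁻¹ := by simp

/-- The set `W(G,N)` of all permutations `φ_{c,f} : x ↦ x·c·f(x̄)` of `G`,
where `c ∈ G` and `f : G/N → N`. -/
def Wset (G : Type*) [Group G] (N : Subgroup G) [N.Normal] : Set (Equiv.Perm G) :=
  {σ | ∃ (c : G) (f : G ⧸ N → G), (∀ q, f q ∈ N) ∧
      ∀ x : G, σ x = x * c * f (QuotientGroup.mk x)}

/-- The wreath product `X ≀ Y` of two digraphs. -/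
def wreathAdj {X Y : Type*} (A : X → X → Prop) (B : Y → Y → Prop) :
    X × Y → X × Y → Prop :=
  fun p q => A p.1 q.1 ∨ (p.1 = q.1 ∧ B p.2 q.2)

/-- The cartesian product `X □ Y` of two digraphs. -/
def cartAdj {X Y : Type*} (A : X → X → Prop) (B : Y → Y → Prop) :
    X × Y → X × Y → Prop :=
  fun p q => (p.1 = q.1 ∧ B p.2 q.2) ∨ (p.2 = q.2 ∧ A p.1 q.1)

/-- A digraph is prime with respect to the cartesian product if it has more than one
vertex and is not isomorphic to a cartesian product of two digraphs,
each with more than one vertex. -/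
def IsPrimeDigraph {V : Type u} (Adj : V → V → Prop) : Prop :=
  (∃ x y : V, x ≠ y) ∧
    ¬ ∃ (X Y : Type u) (A : X → X → Prop) (B : Y → Y → Prop) (e : V ≃ X × Y),
        (∃ x₁ x₂ : X, x₁ ≠ x₂) ∧ (∃ y₁ y₂ : Y, y₁ ≠ y₂) ∧
          ∀ v w : V, Adj v w ↔ cartAdj A B (e v) (e w)

/-- A digraph is weakly connected if any two vertices are joined by a path in the
underlying undirected graph. -/
def WeaklyConnected {V : Type*} (Adj : V → V → Prop) : Prop :=
  ∀ x y : V, Relation.ReflTransGen (fun a b => Adj a b ∨ Adj b a) x y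

/-- Translation of coordinates: the automorphism `v ↦ (x ↦ v (x * q))`
of the group `Q → N`. -/
def transAut {Q N : Type*} [Group Q] [Group N] (q : Q) : (Q → N) ≃* (Q → N) where
  toFun v := fun x => v (x * q)
  invFun v := fun x => v (x * q⁻¹)
  left_inv v := funext fun x => by simp [mul_assoc]
  right_inv v := funext fun x => by simp [mul_assoc]
  map_mul' v w := rfl

/-- The action of `Q` on `Q → N` by translating coordinates, as a homomorphism
`Q →* MulAut (Q → N)`. -/
def transHom (Q N : Type*) [Group Q] [Group N] : Q →* MulAut (Q → N) where
  toFun := transAut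
  map_one' := by
    ext v x
    simp [transAut]
  map_mul' q₁ q₂ := by
    ext v x
    simp [transAut, mul_assoc, MulAut.mul_apply]

/-- The wreath product `Q ≀ N` of two groups: the semidirect product
`N^Q ⋊ Q`, with `Q` acting on `N^Q` by translating the coordinates. -/
abbrev WreathProd (Q N : Type*) [Group Q] [Group N] :=
  SemidirectProduct (Q → N) Q (transHom Q N)


/-! Write an element of `Z_p ≀ Z_p` as `(f, r)` with `f : Z_p → Z_p` and `r ∈ Z_p`, and take
`S = {(±e₀, 0), (±e₀ ± e₁, 0)} ∪ {(f, r) : r = ±1, f ∈ {±1}^p, ∏ f = r}`, which is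
inverse-closed because `(-1)^p = -1` in `Z_p`. Fix a sign vector `ε ≠ 1` with `∏ ε = 1`.
The map `(f, r) ↦ (ε(· + r) f, r)` multiplies the coordinates of each quotient `h g⁻¹` by a
translate of `ε`, which preserves `S`; so it is an automorphism of `Cay(G,S)` fixing `1` that is
not the identity, and `Cay(G,S)` is not a DRR.

Now let `φ` be a group automorphism preserving `S`. The centralizer of an element outside the
base group `B = Z_p^p` has order at most `p²`, so `φ(B) = B`, and `φ` is semilinear on `B` with
respect to the shift by the second coordinate `m` of `φ(0, 1)`. Since `φ` maps `(e₀, 0)` and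
`(e₀ - e₁, 0)` into `S ∩ B`, this forces `m = 1` and `φ = η · id` on `B`. Finally the elements
`(f, 1)` and `(f', 1)` of `S`, where `f = 1` and `f'` flips two adjacent signs, force
`φ(0, 1) = (0, 1)` and then `η = 1`. -/

theorem cayAdj_iff {G : Type*} [Group G] {S : Set G} {g h : G} :
    cayAdj S g h ↔ h * g⁻¹ ∈ S :=
  ⟨fun ⟨s, hs, hh⟩ => by simpa [hh] using hs, fun hS => ⟨h * g⁻¹, hS, by group⟩⟩

theorem not_isDRR_of_mem_digraphAut (G : Type*) [Group G] {V : Type*} {Adj : V → V → Prop}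
    {σ : Equiv.Perm V} (hσ : σ ∈ digraphAut Adj) {v w : V} (hv : σ v = v) (hw : σ w ≠ w) :
    ¬ IsDRR G Adj := by
  rintro ⟨-, hreg⟩
  obtain ⟨τ, -, huniq⟩ := hreg v v
  have hσ1 : (⟨σ, hσ⟩ : digraphAut Adj) = 1 := (huniq _ hv).trans (huniq 1 rfl).symm
  exact hw (by rw [show σ = 1 from congrArg Subtype.val hσ1]; rfl)

theorem not_GRRDetecting_and_not_DRRDetecting {G : Type*} [Group G] {S : Set G}
    (hinv : ∀ s ∈ S, s⁻¹ ∈ S) (hS : AutGSTrivial S) (hnot : ¬ IsDRR G (cayAdj S)) :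
    ¬ GRRDetecting G ∧ ¬ DRRDetecting G :=
  ⟨fun h => hnot (h S hinv hS).2, fun h => hnot (h S hS)⟩

theorem apply_eq_apply_one_of_mul_right_invariant {Q α : Type*} [Monoid Q] {f : Q → α} {k : Q}
    (hk : ∀ q, q ∈ Submonoid.powers k) (hf : ∀ x, f (x * k) = f x) (x : Q) : f x = f 1 := by
  obtain ⟨n, rfl⟩ := (Submonoid.mem_powers_iff _ _).mp (hk x)
  induction n with
  | zero => rw [pow_zero]
  | succ n ih => rw [pow_succ, ← one_mul (k ^ n * k), ← mul_assoc, hf, one_mul, ih]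

namespace WreathProd

open SemidirectProduct

variable {Q N : Type*} [Group Q]

section Group

variable [Group N]

theorem mul_left_apply (a b : WreathProd Q N) (x : Q) :
    (a * b).left x = a.left x * b.left (x * a.right) := rfl

theorem inv_left_apply (a : WreathProd Q N) (x : Q) :
    a⁻¹.left x = (a.left (x * a.right⁻¹))⁻¹ := rfl

variable (φ : WreathProd Q N →* WreathProd Q N) (hφ : ∀ b, (φ (inl b)).right = 1)

def restrictBase : (Q → N) →* (Q → N) where
  toFun b := (φ (inl b)).left
  map_one' := by simp
  map_mul' b b' := by
    simp only [map_mul, SemidirectProduct.mul_left, hφ, map_one, MulAut.one_apply]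

theorem inl_restrictBase (b : Q → N) : inl (restrictBase φ hφ b) = φ (inl b) := by
  ext1
  · rfl
  · exact (hφ b).symm

end Group

variable [CommGroup N]

theorem conj_inl (c : WreathProd Q N) (b : Q → N) :
    c * inl b * c⁻¹ = inl fun x => b (x * c.right) := by
  ext x
  · simp only [mul_left_apply, inv_left_apply, left_inl, SemidirectProduct.mul_right, right_inl,
      mul_one, mul_inv_cancel_right]
    exact mul_inv_cancel_comm _ _
  · simp

theorem restrictBase_apply_mul_right (φ : WreathProd Q N →* WreathProd Q N)
    (hφ : ∀ b, (φ (inl b)).right = 1) (b : Q → N) (q : Q) :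
    restrictBase φ hφ (fun x => b (x * q)) =
      fun x => restrictBase φ hφ b (x * (φ (inr q)).right) := by
  have hconj := conj_inl (inr q : WreathProd Q N) b
  rw [right_inr] at hconj
  apply (inl_injective : Function.Injective (inl : (Q → N) → WreathProd Q N))
  rw [inl_restrictBase, ← hconj, map_mul, map_mul, ← inl_restrictBase φ hφ, map_inv, conj_inl]

theorem eq_of_commute {c c' h : WreathProd Q N} (hgen : ∀ q, q ∈ Submonoid.powers h.right)
    (hc : Commute c h) (hc' : Commute c' h) (hr : c.right = c'.right)
    (h1 : c.left 1 = c'.left 1) : c = c' := by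
  have hshift : ∀ x, c.left (x * h.right) / c'.left (x * h.right) = c.left x / c'.left x := by
    intro x
    have e := congrFun (congrArg SemidirectProduct.left hc.eq) x
    have e' := congrFun (congrArg SemidirectProduct.left hc'.eq) x
    rw [mul_left_apply, mul_left_apply, hr] at e
    rw [mul_left_apply, mul_left_apply] at e'
    rw [eq_inv_mul_of_mul_eq e.symm, eq_inv_mul_of_mul_eq e'.symm, mul_div_mul_left_eq_div,
      mul_div_mul_right_eq_div]
  have hconst := apply_eq_apply_one_of_mul_right_invariant
    (f := fun x => c.left x / c'.left x) hgen hshift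
  ext1
  · funext x
    rw [← div_eq_one, hconst x, h1, div_self']
  · exact hr

end WreathProd

abbrev ZpWrZp (p : ℕ) := WreathProd (Multiplicative (ZMod p)) (Multiplicative (ZMod p))

namespace ZpWrZp

open Multiplicative SemidirectProduct WreathProd

variable {p : ℕ}

section Cyclic

variable [NeZero p]

theorem ofAdd_one_pow_val (q : Multiplicative (ZMod p)) : ofAdd 1 ^ (toAdd q).val = q := by
  rw [← ofAdd_nsmul, nsmul_one, ZMod.natCast_zmod_val, ofAdd_toAdd]

theorem monoidHom_ext_ofAdd_one {M : Type*} [Monoid M] {f g : Multiplicative (ZMod p) →* M}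
    (h : f (ofAdd 1) = g (ofAdd 1)) : f = g :=
  MonoidHom.ext fun q => by rw [← ofAdd_one_pow_val q, map_pow, map_pow, h]

theorem toAdd_map (f : Multiplicative (ZMod p) →* Multiplicative (ZMod p))
    (q : Multiplicative (ZMod p)) : toAdd (f q) = toAdd q * toAdd (f (ofAdd 1)) := by
  conv_lhs => rw [← ofAdd_one_pow_val q]
  rw [map_pow, toAdd_pow, nsmul_eq_mul, ZMod.natCast_zmod_val]

end Cyclic

def coord (w : Multiplicative (ZMod p) → Multiplicative (ZMod p)) (t : ZMod p) : ZMod p :=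
  toAdd (w (ofAdd t))

def ofCoord (f : ZMod p → ZMod p) : Multiplicative (ZMod p) → Multiplicative (ZMod p) :=
  fun x => ofAdd (f (toAdd x))

section Coordinates

variable (w w' : Multiplicative (ZMod p) → Multiplicative (ZMod p))

@[simp] theorem coord_ofCoord (f : ZMod p → ZMod p) : coord (ofCoord f) = f := rfl

@[simp] theorem ofCoord_coord : ofCoord (coord w) = w := rfl

theorem coord_injective : Function.Injective (coord (p := p)) := fun w w' h => by
  rw [← ofCoord_coord w, h, ofCoord_coord]

@[simp] theorem coord_one : coord (1 : Multiplicative (ZMod p) → Multiplicative (ZMod p)) = 0 :=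
  rfl

@[simp] theorem coord_mul : coord (w * w') = coord w + coord w' := rfl

@[simp] theorem coord_inv : coord w⁻¹ = -coord w := rfl

@[simp] theorem coord_pow (n : ℕ) : coord (w ^ n) = n • coord w := by
  funext t
  simp [coord]

@[simp] theorem coord_mulSingle (s a : ZMod p) :
    coord (Pi.mulSingle (ofAdd s) (ofAdd a)) = Pi.single s a := by
  funext t
  by_cases h : t = s <;> simp [coord, h]

theorem coord_apply_mul_right (q : Multiplicative (ZMod p)) :
    coord (fun x => w (x * q)) = fun t => coord w (t + toAdd q) := rfl

theorem coord_mul_left (a b : ZpWrZp p) :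
    coord (a * b).left = fun t => coord a.left t + coord b.left (t + toAdd a.right) := rfl

theorem coord_inv_left (a : ZpWrZp p) :
    coord a⁻¹.left = fun t => -coord a.left (t - toAdd a.right) := by
  funext t
  simp [coord, inv_left_apply, sub_eq_add_neg]

end Coordinates

def IsSignVector (f : ZMod p → ZMod p) : Prop :=
  ∀ t, f t * f t = 1

def IsBaseConn (f : ZMod p → ZMod p) : Prop :=
  f 0 * f 0 = 1 ∧ (f 1 = 0 ∨ f 1 * f 1 = 1) ∧ ∀ t, t ≠ 0 → t ≠ 1 → f t = 0

def IsConn [NeZero p] (f : ZMod p → ZMod p) (r : ZMod p) : Prop :=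
  (r = 0 ∧ IsBaseConn f) ∨ (r * r = 1 ∧ IsSignVector f ∧ ∏ t, f t = r)

def connSet (p : ℕ) [NeZero p] : Set (ZpWrZp p) :=
  {g | IsConn (coord g.left) (toAdd g.right)}

theorem mem_connSet [NeZero p] {g : ZpWrZp p} :
    g ∈ connSet p ↔ IsConn (coord g.left) (toAdd g.right) :=
  Iff.rfl

def pairFlip (s : ZMod p) : ZMod p → ZMod p :=
  Pi.mulSingle s (-1) * Pi.mulSingle (s + 1) (-1)

section Connection

variable {f ε : ZMod p → ZMod p} {r : ZMod p}

theorem IsSignVector.mul (hε : IsSignVector ε) (hf : IsSignVector f) : IsSignVector (ε * f) :=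
  fun t => by rw [Pi.mul_apply, mul_mul_mul_comm, hε t, hf t, one_mul]

theorem IsSignVector.comp_add_right (hε : IsSignVector ε) (c : ZMod p) :
    IsSignVector fun t => ε (t + c) :=
  fun t => hε (t + c)

theorem IsSignVector.mul_mul_self (hε : IsSignVector ε) (f : ZMod p → ZMod p) :
    ε * (ε * f) = f := by
  funext t
  simp only [Pi.mul_apply, ← mul_assoc, hε t, one_mul]

theorem IsBaseConn.sign_mul (hf : IsBaseConn f) (hε : IsSignVector ε) : IsBaseConn (ε * f) := by
  obtain ⟨h0, h1, hrest⟩ := hf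
  refine ⟨by rw [Pi.mul_apply, mul_mul_mul_comm, hε 0, h0, one_mul], ?_, fun t ht0 ht1 => ?_⟩
  · rcases h1 with h1 | h1
    · exact Or.inl (by rw [Pi.mul_apply, h1, mul_zero])
    · exact Or.inr (by rw [Pi.mul_apply, mul_mul_mul_comm, hε 1, h1, one_mul])
  · rw [Pi.mul_apply, hrest t ht0 ht1, mul_zero]

section NeZero

variable [NeZero p]

theorem IsConn.sign_mul (h : IsConn f r) (hε : IsSignVector ε) (hprod : ∏ t, ε t = 1) :
    IsConn (ε * f) r := by
  rcases h with ⟨hr, hf⟩ | ⟨hr, hf, hfprod⟩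
  · exact Or.inl ⟨hr, hf.sign_mul hε⟩
  · refine Or.inr ⟨hr, hε.mul hf, ?_⟩
    simp only [Pi.mul_apply, Finset.prod_mul_distrib, hprod, hfprod, one_mul]

theorem isConn_sign_mul_iff (hε : IsSignVector ε) (hprod : ∏ t, ε t = 1) :
    IsConn (ε * f) r ↔ IsConn f r :=
  ⟨fun h => hε.mul_mul_self f ▸ h.sign_mul hε hprod, fun h => h.sign_mul hε hprod⟩

end NeZero

variable [Fact p.Prime]

theorem IsConn.neg_comp_sub (h : IsConn f r) : IsConn (fun t => -f (t - r)) (-r) := by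
  rcases h with ⟨rfl, hf⟩ | ⟨hr, hf, hfprod⟩
  · have hneg : (fun t => -f (t - 0)) = (-1 : ZMod p → ZMod p) * f := by
      funext t
      simp
    rw [hneg, neg_zero]
    exact Or.inl ⟨rfl, hf.sign_mul fun _ => by simp⟩
  · refine Or.inr ⟨by rw [neg_mul_neg, hr], fun t => by rw [neg_mul_neg, hf], ?_⟩
    show ∏ t, -f (Equiv.subRight r t) = -r
    rw [Equiv.prod_comp (Equiv.subRight r) fun t => -f t, Finset.prod_neg, hfprod,
      Finset.card_univ, ZMod.card, ZMod.pow_card, neg_one_mul]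

theorem isConn_one_iff : IsConn f 1 ↔ IsSignVector f ∧ ∏ t, f t = 1 := by
  simp [IsConn]

theorem isConn_pairFlip (s : ZMod p) : IsConn (pairFlip s) 1 := by
  refine isConn_one_iff.mpr ⟨fun t => ?_, ?_⟩
  · simp only [pairFlip, Pi.mul_apply, Pi.mulSingle_apply]
    split_ifs <;> norm_num
  · simp [pairFlip, Finset.prod_mul_distrib]

theorem pairFlip_self (s : ZMod p) : pairFlip s s = -1 := by
  simp [pairFlip]

end Connection

theorem inv_mem_connSet [Fact p.Prime] : ∀ g ∈ connSet p, g⁻¹ ∈ connSet p := fun g hg => by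
  rw [mem_connSet, coord_inv_left, inv_right, toAdd_inv]
  exact IsConn.neg_comp_sub hg

section Twist

def signTwist (ε : ZMod p → ZMod p) (g : ZpWrZp p) : ZpWrZp p :=
  ⟨ofCoord fun t => ε (t + toAdd g.right) * coord g.left t, g.right⟩

variable {ε : ZMod p → ZMod p}

theorem signTwist_involutive (hε : IsSignVector ε) : Function.Involutive (signTwist ε) := by
  intro g
  ext1
  · apply coord_injective
    funext t
    simp [signTwist, ← mul_assoc, hε _]
  · rfl

theorem signTwist_mul_inv (ε : ZMod p → ZMod p) (g h : ZpWrZp p) :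
    signTwist ε h * (signTwist ε g)⁻¹ =
      ⟨ofCoord ((fun t => ε (t + toAdd h.right)) * coord (h * g⁻¹).left),
        (h * g⁻¹).right⟩ := by
  ext1
  · apply coord_injective
    funext t
    simp only [coord_mul_left, coord_inv_left, signTwist, coord_ofCoord, Pi.mul_apply]
    rw [sub_add_cancel]
    ring
  · rfl

theorem signTwist_mem_digraphAut [NeZero p] (hε : IsSignVector ε) (hprod : ∏ t, ε t = 1) :
    (signTwist_involutive hε).toPerm ∈ digraphAut (cayAdj (connSet p)) := fun g h => by
  rw [cayAdj_iff, cayAdj_iff, Function.Involutive.coe_toPerm, signTwist_mul_inv, mem_connSet,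
    mem_connSet, coord_ofCoord]
  exact isConn_sign_mul_iff (hε.comp_add_right _)
    ((Equiv.prod_comp (Equiv.addRight _) ε).trans hprod)

theorem not_isDRR_cayAdj_connSet [Fact p.Prime] [Fact (2 < p)] :
    ¬ IsDRR (ZpWrZp p) (cayAdj (connSet p)) := by
  obtain ⟨hε, hprod⟩ := isConn_one_iff.mp (isConn_pairFlip (0 : ZMod p))
  refine not_isDRR_of_mem_digraphAut _ (signTwist_mem_digraphAut hε hprod) (v := 1)
    (w := inl (ofCoord 1)) ?_ fun h => ?_
  · ext1
    · apply coord_injective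
      funext t
      simp [signTwist]
    · rfl
  · have h0 := congrArg (fun g => coord g.left 0) h
    simp [signTwist, pairFlip_self] at h0
    exact ZMod.neg_one_ne_one h0

end Twist

theorem coord_map_eq_smul [NeZero p]
    (ψ : (Multiplicative (ZMod p) → Multiplicative (ZMod p)) →*
      (Multiplicative (ZMod p) → Multiplicative (ZMod p))) (η : ZMod p)
    (hψ : ∀ s, coord (ψ (Pi.mulSingle (ofAdd s) (ofAdd 1))) = Pi.single s η)
    (b : Multiplicative (ZMod p) → Multiplicative (ZMod p)) : coord (ψ b) = η • coord b := by
  have hpow : ψ = powMonoidHom η.val := by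
    refine MonoidHom.functions_ext _ _ _ fun i x => ?_
    rw [← ofAdd_one_pow_val x, Pi.mulSingle_pow, map_pow, map_pow]
    congr 1
    apply coord_injective
    rw [← ofAdd_toAdd i, hψ, powMonoidHom_apply, coord_pow, coord_mulSingle, ← Pi.single_smul,
      nsmul_one, ZMod.natCast_zmod_val]
  rw [hpow, powMonoidHom_apply, coord_pow, ← Nat.cast_smul_eq_nsmul (ZMod p),
    ZMod.natCast_zmod_val]

theorem zmod_two_ne_zero [Fact (2 < p)] : (2 : ZMod p) ≠ 0 :=
  fun h => ZMod.neg_one_ne_one (by linear_combination -h)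

section Automorphisms

variable [Fact p.Prime] [Fact (2 < p)]

theorem right_map_inl_eq_one (φ : MulAut (ZpWrZp p))
    (b : Multiplicative (ZMod p) → Multiplicative (ZMod p)) : (φ (inl b)).right = 1 := by
  by_contra hb
  have hgen : ∀ q, q ∈ Submonoid.powers (φ (inl b)).right :=
    fun q => mem_powers_of_prime_card (p := p) (by simp) hb
  have hcomm : ∀ b', Commute (φ (inl b')) (φ (inl b)) :=
    fun b' => ((Commute.all b' b).map inl).map φ
  have hinj : Function.Injective fun b' => ((φ (inl b')).right, (φ (inl b')).left 1) :=
    fun b₁ b₂ h => inl_injective <| φ.injective <|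
      eq_of_commute hgen (hcomm b₁) (hcomm b₂) (congrArg Prod.fst h) (congrArg Prod.snd h)
  have hcard := Fintype.card_le_of_injective _ hinj
  simp only [Fintype.card_fun, Fintype.card_prod, Fintype.card_multiplicative, ZMod.card] at hcard
  rw [← sq] at hcard
  exact absurd hcard (not_le.mpr (Nat.pow_lt_pow_right (Fact.out : p.Prime).one_lt Fact.out))

theorem eq_one_and_eq_single_of_isBaseConn_sub {g : ZMod p → ZMod p} {m : ZMod p}
    (hg : IsBaseConn g) (hv : IsBaseConn fun t => g t - g (t - m)) :
    m = 1 ∧ g = Pi.single 0 (g 0) := by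
  obtain ⟨hg0, hg1, hg⟩ := hg
  obtain ⟨hv0, -, hv⟩ := hv
  have hm0 : m ≠ 0 := by
    rintro rfl
    simp at hv0
  have hm1 : m = 1 := by
    by_contra hm1
    have h : g m - g (m - m) = 0 := hv m hm0 hm1
    rw [hg m hm0 hm1, sub_self, zero_sub, neg_eq_zero] at h
    simp [h] at hg0
  subst hm1
  have h21 : (2 : ZMod p) ≠ 1 := fun h => one_ne_zero (by linear_combination h)
  have hg1 : g 1 = 0 := by
    have h : g 2 - g (2 - 1) = 0 := hv 2 zmod_two_ne_zero h21
    rwa [hg 2 zmod_two_ne_zero h21, show (2 : ZMod p) - 1 = 1 by ring, zero_sub,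
      neg_eq_zero] at h
  refine ⟨rfl, funext fun t => ?_⟩
  by_cases ht0 : t = 0
  · simp [ht0]
  by_cases ht1 : t = 1
  · simp [ht1, hg1]
  · simp [ht0, hg t ht0 ht1]

theorem eq_one_and_eq_zero_of_forall_isConn_mul_add {η : ZMod p} {u : ZMod p → ZMod p}
    (hη : η ≠ 0) (h : ∀ f, IsConn f 1 → IsConn (fun t => η * f t + u t) 1) : η = 1 ∧ u = 0 := by
  have hone : IsConn (1 : ZMod p → ZMod p) 1 := isConn_one_iff.mpr ⟨fun _ => by simp, by simp⟩
  have hu : u = 0 := by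
    funext s
    have h1 := (isConn_one_iff.mp (h 1 hone)).1 s
    have h2 := (isConn_one_iff.mp (h _ (isConn_pairFlip s))).1 s
    simp only [Pi.one_apply, pairFlip_self] at h1 h2
    have h4 : (2 * 2 * η) * u s = 0 := by linear_combination h1 - h2
    simpa [zmod_two_ne_zero, hη] using h4
  refine ⟨?_, hu⟩
  simpa [hu, ZMod.pow_card] using (isConn_one_iff.mp (h 1 hone)).2

theorem coord_map_inl_mulSingle (φ : MulAut (ZpWrZp p)) (s : ZMod p) :
    coord (φ (inl (Pi.mulSingle (ofAdd s) (ofAdd 1)))).left = fun t =>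
      coord (φ (inl (Pi.mulSingle (ofAdd 0) (ofAdd 1)))).left
        (t - s * toAdd (φ (inr (ofAdd 1))).right) := by
  have hB : ∀ b, ((φ : ZpWrZp p →* ZpWrZp p) (inl b)).right = 1 := right_map_inl_eq_one φ
  have hρ := toAdd_map (rightHom.comp ((φ : ZpWrZp p →* ZpWrZp p).comp inr))
  simp only [MonoidHom.comp_apply, rightHom_eq_right] at hρ
  have hshift : Pi.mulSingle (ofAdd s) (ofAdd 1) =
      fun x => (Pi.mulSingle (ofAdd 0) (ofAdd 1) :
        Multiplicative (ZMod p) → Multiplicative (ZMod p)) (x * ofAdd (-s)) := by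
    funext x
    simp [Pi.mulSingle_apply, mul_eq_one_iff_eq_inv]
  change coord (restrictBase _ hB _) = _
  rw [hshift, restrictBase_apply_mul_right, coord_apply_mul_right]
  funext t
  rw [hρ, toAdd_ofAdd, neg_mul, ← sub_eq_add_neg]
  rfl

theorem isBaseConn_coord_map_inl {φ : MulAut (ZpWrZp p)}
    (hS : ∀ g ∈ connSet p, φ g ∈ connSet p)
    {b : Multiplicative (ZMod p) → Multiplicative (ZMod p)}
    (hb : IsBaseConn (coord b)) : IsBaseConn (coord (φ (inl b)).left) := by
  have h := hS (inl b) (Or.inl ⟨toAdd_one, hb⟩)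
  rw [mem_connSet, right_map_inl_eq_one, toAdd_one] at h
  rcases h with ⟨-, h⟩ | ⟨h, -⟩
  · exact h
  · simp at h

theorem exists_coord_map_inl_eq_smul (φ : MulAut (ZpWrZp p))
    (hS : ∀ g ∈ connSet p, φ g ∈ connSet p) :
    (φ (inr (ofAdd 1))).right = ofAdd 1 ∧
      ∃ η : ZMod p, η ≠ 0 ∧ ∀ b, coord (φ (inl b)).left = η • coord b := by
  have hB : ∀ b, ((φ : ZpWrZp p →* ZpWrZp p) (inl b)).right = 1 := right_map_inl_eq_one φ
  let e : ZMod p → Multiplicative (ZMod p) → Multiplicative (ZMod p) :=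
    fun s => Pi.mulSingle (ofAdd s) (ofAdd 1)
  have he := coord_map_inl_mulSingle φ
  set g := coord (φ (inl (e 0))).left
  set m := toAdd (φ (inr (ofAdd 1))).right
  have hg : IsBaseConn g :=
    isBaseConn_coord_map_inl hS (by rw [coord_mulSingle]; simp +contextual [IsBaseConn])
  have hv : IsBaseConn fun t => g t - g (t - m) := by
    have h := isBaseConn_coord_map_inl hS (b := e 0 * (e 1)⁻¹) (by
      rw [coord_mul, coord_inv, coord_mulSingle, coord_mulSingle]
      simp +contextual [IsBaseConn])
    change IsBaseConn (coord (restrictBase _ hB _)) at h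
    rw [map_mul, map_inv, coord_mul, coord_inv] at h
    convert h using 1
    funext t
    simp [restrictBase, he 1, sub_eq_add_neg, g, m, e]
  obtain ⟨hm, hg0⟩ := eq_one_and_eq_single_of_isBaseConn_sub hg hv
  refine ⟨by rw [← ofAdd_toAdd (φ _).right]; exact congrArg ofAdd hm,
    g 0, left_ne_zero_of_mul_eq_one hg.1, coord_map_eq_smul (restrictBase _ hB) (g 0) fun s => ?_⟩
  change coord (φ (inl (e s))).left = _
  rw [he, hm]
  funext t
  rw [hg0]
  simp [Pi.single_apply, sub_eq_zero]

theorem autGSTrivial_connSet : AutGSTrivial (connSet p) := by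
  intro φ hφ
  have hS : ∀ g ∈ connSet p, φ g ∈ connSet p :=
    fun g hg => hφ ▸ Set.mem_image_of_mem φ hg
  have hB := right_map_inl_eq_one φ
  obtain ⟨hm, η, hη, hbase⟩ := exists_coord_map_inl_eq_smul φ hS
  have hcoset : ∀ f, IsConn f 1 →
      IsConn (fun t => η * f t + coord (φ (inr (ofAdd 1))).left t) 1 := by
    intro f hf
    have h := hS ⟨ofCoord f, ofAdd 1⟩ hf
    rw [mk_eq_inl_mul_inr, map_mul, mem_connSet, coord_mul_left, SemidirectProduct.mul_right,
      hB, one_mul, hm, toAdd_ofAdd, hbase] at h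
    simpa using h
  obtain ⟨rfl, hu⟩ := eq_one_and_eq_zero_of_forall_isConn_mul_add hη hcoset
  have hinl : ∀ b, φ (inl b) = inl b := fun b => by
    ext1
    · exact coord_injective (by rw [hbase, one_smul]; rfl)
    · exact hB b
  have hinr : (φ : ZpWrZp p →* ZpWrZp p).comp inr = inr := by
    refine monoidHom_ext_ofAdd_one ?_
    ext1
    · exact coord_injective hu
    · exact hm
  refine MulEquiv.ext fun x => ?_
  rw [← inl_left_mul_inr_right x, map_mul, hinl]
  exact congrArg (inl x.left * ·) (DFunLike.congr_fun hinr x.right)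

end Automorphisms

end ZpWrZp

/-- For every odd prime `p`, the wreath product `Z_p ≀ Z_p`
(the semidirect product of `Z_p` with `(Z_p)^p`, acting by cyclically permuting the
coordinates) is not GRR-detecting, and consequently not DRR-detecting. -/
theorem ZpWrZp_not_GRRDetecting (p : ℕ) (hp : p.Prime) (hodd : Odd p) :
    ¬ GRRDetecting (WreathProd (Multiplicative (ZMod p)) (Multiplicative (ZMod p))) ∧
      ¬ DRRDetecting (WreathProd (Multiplicative (ZMod p)) (Multiplicative (ZMod p))) := by
  have : Fact p.Prime := ⟨hp⟩
  have : Fact (2 < p) := ⟨by have := hp.two_le; have := Nat.odd_iff.mp hodd; omega⟩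
  exact not_GRRDetecting_and_not_DRRDetecting ZpWrZp.inv_mem_connSet ZpWrZp.autGSTrivial_connSet
    ZpWrZp.not_isDRR_cayAdj_connSet
end

section
/- If G₁ and G₂ are nontrivial finite groups that each admit a GRR, and gcd(|G₁|, |G₂|) = 1, then the direct product G₁ × G₂ is not GRR-detecting. -/
/-! Common definitions: Cayley digraphs, digraph automorphism groups,
DRRs/GRRs, detecting groups, the regular representation, the group `W(G,N)`,
wreath and cartesian products of digraphs, and the wreath product of groups. -/

universe u

/-! Take GRRs `Cay(G₁, S₁)` and `Cay(G₂, S₂)` and let `S ⊆ G₁ × G₂` be the connection set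
of their wreath product `Cay(G₁, S₁) ≀ Cay(G₂, S₂)`. Since the orders are coprime, every
automorphism of `G₁ × G₂` is a product `φ₁ × φ₂`, and it preserves `S` only if `φᵢ`
preserves `Sᵢ`; as a GRR has `Aut(Gᵢ, Sᵢ) = 1`, this gives `Aut(G₁ × G₂, S) = 1`. But the
wreath product is not a GRR as soon as `G₁` has two elements: applying a nontrivial
automorphism of `Cay(G₂, S₂)` to a single fibre is an automorphism fixing the other
fibres pointwise. -/

section Coprime

variable {G₁ G₂ : Type*} [Group G₁] [Group G₂] [Fintype G₁] [Fintype G₂]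

theorem MonoidHom.eq_one_of_coprime_card (hco : (Fintype.card G₁).Coprime (Fintype.card G₂))
    (f : G₁ →* G₂) : f = 1 := by
  ext g
  exact orderOf_eq_one_iff.mp <| Nat.eq_one_of_dvd_coprimes hco
    ((orderOf_map_dvd f g).trans orderOf_dvd_card) orderOf_dvd_card

theorem MulAut.exists_eq_prodCongr_of_coprime_card
    (hco : (Fintype.card G₁).Coprime (Fintype.card G₂)) (φ : MulAut (G₁ × G₂)) :
    ∃ (φ₁ : MulAut G₁) (φ₂ : MulAut G₂), φ = φ₁.prodCongr φ₂ := by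
  let φ' : G₁ × G₂ →* G₁ × G₂ := φ
  have hsnd (a : G₁) : (φ (a, 1)).2 = 1 := DFunLike.congr_fun
    (((MonoidHom.snd G₁ G₂).comp (φ'.comp (MonoidHom.inl G₁ G₂))).eq_one_of_coprime_card hco) a
  have hfst (b : G₂) : (φ (1, b)).1 = 1 := DFunLike.congr_fun
    (((MonoidHom.fst G₁ G₂).comp (φ'.comp (MonoidHom.inr G₁ G₂))).eq_one_of_coprime_card
      hco.symm) b
  let ψ₁ := (MonoidHom.fst G₁ G₂).comp (φ'.comp (MonoidHom.inl G₁ G₂))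
  let ψ₂ := (MonoidHom.snd G₁ G₂).comp (φ'.comp (MonoidHom.inr G₁ G₂))
  have hφ (a : G₁) (b : G₂) : φ (a, b) = (ψ₁ a, ψ₂ b) := by
    rw [show ((a, b) : G₁ × G₂) = (a, 1) * (1, b) by simp, map_mul]
    exact Prod.ext (by simp [ψ₁, φ', hfst]) (by simp [ψ₂, φ', hsnd])
  have hψ₁ : Function.Injective ψ₁ := fun a a' h =>
    congrArg Prod.fst (φ.injective (by rw [hφ, hφ, h]) : ((a, 1) : G₁ × G₂) = (a', 1))
  have hψ₂ : Function.Injective ψ₂ := fun b b' h =>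
    congrArg Prod.snd (φ.injective (by rw [hφ, hφ, h]) : ((1, b) : G₁ × G₂) = (1, b'))
  refine ⟨MulEquiv.ofBijective ψ₁ (Finite.injective_iff_bijective.mp hψ₁),
    MulEquiv.ofBijective ψ₂ (Finite.injective_iff_bijective.mp hψ₂), ?_⟩
  exact MulEquiv.ext fun ⟨a, b⟩ => hφ a b

end Coprime

section Detecting

variable {G : Type*} [Group G]

theorem autGSTrivial_iff_preimage {S : Set G} :
    AutGSTrivial S ↔ ∀ φ : MulAut G, ⇑φ ⁻¹' S = S → φ = 1 := by
  simp only [AutGSTrivial, Set.preimage_eq_iff_eq_image (MulEquiv.bijective _), eq_comm]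

theorem MulEquiv.toEquiv_mem_digraphAut_cayAdj {S : Set G} (φ : MulAut G)
    (hφ : ⇑φ ⁻¹' S = S) : φ.toEquiv ∈ digraphAut (cayAdj S) := by
  intro x y
  change (∃ s ∈ S, φ y = s * φ x) ↔ ∃ s ∈ S, y = s * x
  rw [φ.surjective.exists]
  simp only [← map_mul, φ.injective.eq_iff, ← Set.mem_preimage, hφ]

theorem mulRight_mem_digraphAut_cayAdj (S : Set G) (g : G) :
    Equiv.mulRight g ∈ digraphAut (cayAdj S) := by
  intro x y
  simp only [cayAdj, Equiv.coe_mulRight, ← mul_assoc, mul_left_inj]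

theorem IsDRR.eq_one_of_apply_eq_self {V : Type*} {Adj : V → V → Prop} (h : IsDRR G Adj)
    {σ : Equiv.Perm V} (hσ : σ ∈ digraphAut Adj) {v : V} (hv : σ v = v) : σ = 1 :=
  congrArg Subtype.val ((h.2 v v).unique (y₁ := ⟨σ, hσ⟩) (y₂ := 1) hv rfl)

theorem IsDRR.autGSTrivial {S : Set G} (h : IsDRR G (cayAdj S)) : AutGSTrivial S := by
  refine autGSTrivial_iff_preimage.mpr fun φ hφ => ?_
  have hid := h.eq_one_of_apply_eq_self (φ.toEquiv_mem_digraphAut_cayAdj hφ) (v := 1)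
    (map_one φ)
  ext g
  exact Equiv.congr_fun hid g

end Detecting

section Wreath

variable {X Y : Type*} [DecidableEq X]

theorem prodExtendRight_mem_digraphAut_wreathAdj (A : X → X → Prop) {B : Y → Y → Prop}
    (x₀ : X) {τ : Equiv.Perm Y} (hτ : τ ∈ digraphAut B) :
    Equiv.Perm.prodExtendRight x₀ τ ∈ digraphAut (wreathAdj A B) := by
  rintro ⟨x, y⟩ ⟨x', y'⟩
  simp only [wreathAdj, Equiv.Perm.fst_prodExtendRight]
  refine or_congr Iff.rfl (and_congr_right fun (hx : x = x') => ?_)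
  subst hx
  by_cases h : x = x₀
  · subst h
    simpa using hτ y y'
  · simp [Equiv.Perm.prodExtendRight_apply_ne _ h]

theorem not_isDRR_wreathAdj (G : Type*) [Group G] [Nontrivial X] (A : X → X → Prop)
    {B : Y → Y → Prop} {τ : Equiv.Perm Y} (hτ : τ ∈ digraphAut B) (hτ1 : τ ≠ 1) :
    ¬ IsDRR G (wreathAdj A B) := by
  intro hdrr
  obtain ⟨x₀, x₁, hx⟩ := exists_pair_ne X
  obtain ⟨y, hy⟩ : ∃ y, τ y ≠ y := by
    by_contra! h
    exact hτ1 (Equiv.ext h)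
  have hid := hdrr.eq_one_of_apply_eq_self (prodExtendRight_mem_digraphAut_wreathAdj A x₀ hτ)
    (v := (x₁, y)) (Equiv.Perm.prodExtendRight_apply_ne _ hx.symm _)
  exact hy (by simpa using Equiv.congr_fun hid (x₀, y))

end Wreath

section WreathConnectionSet

variable {G₁ G₂ : Type*} [Group G₁]

/-- `1` is removed from `S₁`: otherwise the set would contain the whole fibre `{1} × G₂`
and forget `S₂`. -/
def wreathConnectionSet (S₁ : Set G₁) (S₂ : Set G₂) : Set (G₁ × G₂) :=
  (S₁ \ {1}) ×ˢ Set.univ ∪ {1} ×ˢ S₂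

variable {S₁ : Set G₁} {S₂ : Set G₂}

theorem mk_mem_wreathConnectionSet_of_ne_one {a : G₁} (ha : a ≠ 1) (b : G₂) :
    (a, b) ∈ wreathConnectionSet S₁ S₂ ↔ a ∈ S₁ := by
  simp [wreathConnectionSet, ha]

theorem one_mk_mem_wreathConnectionSet (b : G₂) :
    ((1 : G₁), b) ∈ wreathConnectionSet S₁ S₂ ↔ b ∈ S₂ := by
  simp [wreathConnectionSet]

theorem inv_mem_wreathConnectionSet [Group G₂] (h₁ : ∀ s ∈ S₁, s⁻¹ ∈ S₁)
    (h₂ : ∀ s ∈ S₂, s⁻¹ ∈ S₂) :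
    ∀ s ∈ wreathConnectionSet S₁ S₂, s⁻¹ ∈ wreathConnectionSet S₁ S₂ := by
  rintro ⟨a, b⟩ hs
  rw [Prod.inv_mk]
  by_cases ha : a = 1
  · subst ha
    rw [one_mk_mem_wreathConnectionSet] at hs
    rw [inv_one, one_mk_mem_wreathConnectionSet]
    exact h₂ b hs
  · rw [mk_mem_wreathConnectionSet_of_ne_one ha] at hs
    rw [mk_mem_wreathConnectionSet_of_ne_one (inv_ne_one.mpr ha)]
    exact h₁ a hs

theorem cayAdj_wreathConnectionSet [Group G₂] (S₁ : Set G₁) (S₂ : Set G₂) :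
    cayAdj (wreathConnectionSet S₁ S₂) = wreathAdj (cayAdj (S₁ \ {1})) (cayAdj S₂) := by
  ext ⟨a, b⟩ ⟨a', b'⟩
  simp only [cayAdj, wreathAdj, wreathConnectionSet, Prod.exists, Set.mem_union,
    Set.mem_prod, Set.mem_univ, and_true, Set.mem_singleton_iff, Prod.mk_mul_mk, Prod.mk.injEq]
  constructor
  · rintro ⟨s, t, hs | ⟨rfl, ht⟩, rfl, rfl⟩
    · exact Or.inl ⟨s, hs, rfl⟩
    · exact Or.inr ⟨(one_mul a).symm, t, ht, rfl⟩
  · rintro (⟨s, hs, rfl⟩ | ⟨rfl, t, ht, rfl⟩)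
    · exact ⟨s, b' * b⁻¹, Or.inl hs, rfl, by group⟩
    · exact ⟨1, t, Or.inr ⟨rfl, ht⟩, (one_mul a).symm, rfl⟩

theorem autGSTrivial_wreathConnectionSet [Group G₂] [Fintype G₁] [Fintype G₂]
    (hco : (Fintype.card G₁).Coprime (Fintype.card G₂)) (h₁ : AutGSTrivial S₁)
    (h₂ : AutGSTrivial S₂) : AutGSTrivial (wreathConnectionSet S₁ S₂) := by
  rw [autGSTrivial_iff_preimage] at h₁ h₂ ⊢
  intro φ hφ
  obtain ⟨φ₁, φ₂, rfl⟩ := MulAut.exists_eq_prodCongr_of_coprime_card hco φ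
  have hmem (a : G₁) (b : G₂) :
      (φ₁ a, φ₂ b) ∈ wreathConnectionSet S₁ S₂ ↔ (a, b) ∈ wreathConnectionSet S₁ S₂ :=
    Set.ext_iff.mp hφ (a, b)
  have hφ₁ : ⇑φ₁ ⁻¹' S₁ = S₁ := by
    ext a
    by_cases ha : a = 1
    · simp [ha]
    simpa [mk_mem_wreathConnectionSet_of_ne_one ha,
      mk_mem_wreathConnectionSet_of_ne_one ((map_ne_one_iff φ₁ φ₁.injective).mpr ha)]
      using hmem a 1
  have hφ₂ : ⇑φ₂ ⁻¹' S₂ = S₂ := by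
    ext b
    simpa [one_mk_mem_wreathConnectionSet] using hmem 1 b
  rw [h₁ φ₁ hφ₁, h₂ φ₂ hφ₂]
  rfl

end WreathConnectionSet

/-- If `G₁` and `G₂` are nontrivial finite groups that each admit a GRR
and `gcd(|G₁|,|G₂|) = 1`, then `G₁ × G₂` is not GRR-detecting. -/
theorem directProduct_coprime_not_GRRDetecting {G₁ G₂ : Type*} [Group G₁] [Group G₂]
    [Fintype G₁] [Fintype G₂] [Nontrivial G₁] [Nontrivial G₂]
    (h₁ : HasGRR G₁) (h₂ : HasGRR G₂)
    (hco : Nat.gcd (Fintype.card G₁) (Fintype.card G₂) = 1) :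
    ¬ GRRDetecting (G₁ × G₂) := by
  classical
  obtain ⟨S₁, hinv₁, -, hdrr₁⟩ := h₁
  obtain ⟨S₂, hinv₂, -, hdrr₂⟩ := h₂
  intro hdet
  obtain ⟨-, hdrr⟩ := hdet _ (inv_mem_wreathConnectionSet hinv₁ hinv₂)
    (autGSTrivial_wreathConnectionSet hco hdrr₁.autGSTrivial hdrr₂.autGSTrivial)
  rw [cayAdj_wreathConnectionSet] at hdrr
  obtain ⟨g, hg⟩ := exists_ne (1 : G₂)
  refine not_isDRR_wreathAdj _ _ (mulRight_mem_digraphAut_cayAdj S₂ g) (fun h => hg ?_) hdrr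
  simpa using Equiv.congr_fun h 1
end

section
/- Let N be a normal subgroup of a finite group G. Then W(G,N) is a subgroup of the symmetric group on G, it contains the right regular representation of G, and it has order |G/N| · |N|^{|G/N|} (it is isomorphic to the wreath product (G/N) ≀ N, i.e., the semidirect product (G/N) ⋉ N^{G/N} with G/N acting by translating coordinates). -/
/-! Common definitions: Cayley digraphs, digraph automorphism groups,
DRRs/GRRs, detecting groups, the regular representation, the group `W(G,N)`,
wreath and cartesian products of digraphs, and the wreath product of groups. -/

universe u

/-! Writing each `x ∈ G` as `n * t x̄` with `n ∈ N` and `t` a transversal of `N` identifies `G`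
with `(G ⧸ N) × N`. Under this identification the maps `x ↦ x * c * f x̄` become exactly the
maps `(a, n) ↦ (a * q, n * u a)`, which form the image of the faithful imprimitive action of
`(G ⧸ N) ≀ N` on `(G ⧸ N) × N`. So `W(G,N)` is the image of an injective homomorphism from the
wreath product, which gives the subgroup, its order and the isomorphism at once; and
`φ_{g,1}` is right multiplication by `g`. -/

namespace WreathProd

variable {Q N : Type*} [Group Q] [Group N]

/-- The imprimitive action of `Q ≀ N` on `Q × N`; the inverses make it a left action. -/
def toPerm : WreathProd Q N →* Equiv.Perm (Q × N) where
  toFun w :=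
    { toFun := fun p => (p.1 * w.right⁻¹, p.2 * (w.left (p.1 * w.right⁻¹))⁻¹)
      invFun := fun p => (p.1 * w.right, p.2 * w.left p.1)
      left_inv := fun p => by simp [mul_assoc]
      right_inv := fun p => by simp [mul_assoc] }
  map_one' := by ext p <;> simp
  map_mul' w₁ w₂ := by ext p <;> simp [transHom, transAut, mul_assoc]

theorem toPerm_apply (w : WreathProd Q N) (p : Q × N) :
    toPerm w p = (p.1 * w.right⁻¹, p.2 * (w.left (p.1 * w.right⁻¹))⁻¹) :=
  rfl

theorem toPerm_injective : Function.Injective (toPerm (Q := Q) (N := N)) := by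
  rw [injective_iff_map_eq_one]
  intro w hw
  have hright : w.right = 1 := by
    simpa [toPerm_apply] using congrArg (fun σ : Equiv.Perm (Q × N) => (σ (1, 1)).1) hw
  have hleft : w.left = 1 := funext fun a => by
    simpa [toPerm_apply, hright] using
      congrArg (fun σ : Equiv.Perm (Q × N) => (σ (a, 1)).2) hw
  exact SemidirectProduct.ext hleft hright

theorem mem_range_toPerm_iff {σ : Equiv.Perm (Q × N)} :
    σ ∈ (toPerm (Q := Q) (N := N)).range ↔
      ∃ (q : Q) (u : Q → N), ∀ p, σ p = (p.1 * q, p.2 * u p.1) := by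
  constructor
  · rintro ⟨w, rfl⟩
    exact ⟨w.right⁻¹, fun a => (w.left (a * w.right⁻¹))⁻¹, fun p => rfl⟩
  · rintro ⟨q, u, hσ⟩
    refine ⟨⟨fun b => (u (b * q⁻¹))⁻¹, q⁻¹⟩, Equiv.ext fun p => ?_⟩
    simp only [toPerm_apply, hσ, inv_inv, mul_inv_cancel_right]

end WreathProd

namespace Subgroup

variable {G : Type*} [Group G] (N : Subgroup G) [N.Normal]

/-- Writes `x = n * out x̄` with `n ∈ N`: the `N`-component sits on the left, unlike in
`Subgroup.groupEquivQuotientProdSubgroup`, so that the maps `x ↦ x * c * f x̄` multiply it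
on the right. -/
noncomputable def groupEquivQuotientProdNormal : G ≃ (G ⧸ N) × N where
  toFun x := ((x : G ⧸ N), ⟨x * (x : G ⧸ N).out⁻¹, by
    rw [← QuotientGroup.eq_one_iff]
    simp⟩)
  invFun p := p.2 * p.1.out
  left_inv x := by simp
  right_inv p := by
    have hmk : ((p.2 * p.1.out : G) : G ⧸ N) = p.1 := by
      simp [(QuotientGroup.eq_one_iff _).mpr p.2.2]
    exact Prod.ext hmk (Subtype.ext (by simp [hmk]))

theorem groupEquivQuotientProdNormal_apply_fst (x : G) :
    (N.groupEquivQuotientProdNormal x).1 = x :=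
  rfl

theorem groupEquivQuotientProdNormal_apply_snd_coe (x : G) :
    ((N.groupEquivQuotientProdNormal x).2 : G) = x * (x : G ⧸ N).out⁻¹ :=
  rfl

theorem groupEquivQuotientProdNormal_symm_apply (p : (G ⧸ N) × N) :
    N.groupEquivQuotientProdNormal.symm p = p.2 * p.1.out :=
  rfl

end Subgroup

section Wset

variable {G : Type*} [Group G] {N : Subgroup G} [N.Normal]

theorem mem_Wset_iff_exists_transversal {σ : Equiv.Perm G} :
    σ ∈ Wset G N ↔ ∃ (q : G ⧸ N) (u : G ⧸ N → N),
      ∀ x : G, σ x = x * (x : G ⧸ N).out⁻¹ * u x * ((x : G ⧸ N) * q).out := by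
  constructor
  · rintro ⟨c, f, hf, hσ⟩
    refine ⟨c, fun a => ⟨a.out * c * f a * (a * c).out⁻¹, ?_⟩, fun x => ?_⟩
    · rw [← QuotientGroup.eq_one_iff]
      simp [hf a]
    · simp [hσ, mul_assoc]
  · rintro ⟨q, u, hσ⟩
    refine ⟨q.out, fun a => q.out⁻¹ * a.out⁻¹ * u a * (a * q).out, fun a => ?_, fun x => ?_⟩
    · rw [← QuotientGroup.eq_one_iff]
      simp only [QuotientGroup.mk_mul, QuotientGroup.mk_inv, QuotientGroup.out_eq',
        (QuotientGroup.eq_one_iff _).mpr (u a).2]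
      group
    · rw [hσ]
      group

theorem permCongr_mem_range_toPerm_iff {σ : Equiv.Perm G} :
    N.groupEquivQuotientProdNormal.permCongr σ ∈
        (WreathProd.toPerm (Q := G ⧸ N) (N := N)).range ↔ σ ∈ Wset G N := by
  set e := N.groupEquivQuotientProdNormal
  rw [WreathProd.mem_range_toPerm_iff, mem_Wset_iff_exists_transversal]
  refine exists_congr fun q => exists_congr fun u => ?_
  refine e.symm.forall_congr_left.trans (forall_congr' fun x => ?_)
  rw [Equiv.symm_symm, Equiv.permCongr_apply, e.symm_apply_apply, ← e.eq_symm_apply,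
    Subgroup.groupEquivQuotientProdNormal_symm_apply]
  simp only [e, Subgroup.groupEquivQuotientProdNormal_apply_fst, Subgroup.coe_mul,
    Subgroup.groupEquivQuotientProdNormal_apply_snd_coe]

variable (N) in
noncomputable def wreathProdEmbedding : WreathProd (G ⧸ N) N →* Equiv.Perm G :=
  N.groupEquivQuotientProdNormal.symm.permCongrHom.toMonoidHom.comp WreathProd.toPerm

theorem wreathProdEmbedding_injective : Function.Injective (wreathProdEmbedding N) :=
  N.groupEquivQuotientProdNormal.symm.permCongrHom.injective.comp WreathProd.toPerm_injective

theorem coe_range_wreathProdEmbedding :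
    ((wreathProdEmbedding N).range : Set (Equiv.Perm G)) = Wset G N := by
  ext σ
  rw [SetLike.mem_coe, wreathProdEmbedding, MonoidHom.range_comp, Subgroup.mem_map_equiv,
    Equiv.permCongrHom_symm, Equiv.symm_symm, Equiv.permCongrHom_coe]
  exact permCongr_mem_range_toPerm_iff

end Wset

/-- `W(G,N)` is a subgroup of the symmetric group on `G`, it contains
the right regular representation of `G`, has order `|G/N| · |N|^{|G/N|}`, and is
isomorphic to the wreath product `(G/N) ≀ N`. -/
theorem Wset_is_subgroup {G : Type*} [Group G] [Fintype G] (N : Subgroup G) [N.Normal] :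
    ∃ W : Subgroup (Equiv.Perm G), (↑W : Set (Equiv.Perm G)) = Wset G N ∧
      regularRep G ≤ W ∧
      Nat.card ↥W = Nat.card (G ⧸ N) * Nat.card ↥N ^ Nat.card (G ⧸ N) ∧
      Nonempty (↥W ≃* WreathProd (G ⧸ N) ↥N) := by
  let iso := MonoidHom.ofInjective (wreathProdEmbedding_injective (N := N))
  refine ⟨(wreathProdEmbedding N).range, coe_range_wreathProdEmbedding, ?_, ?_, ⟨iso.symm⟩⟩
  · rintro σ ⟨g, hg⟩
    rw [← SetLike.mem_coe, coe_range_wreathProdEmbedding]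
    exact ⟨g, 1, fun _ => N.one_mem, by simpa using hg⟩
  · rw [← Nat.card_congr iso.toEquiv, SemidirectProduct.card, Nat.card_fun, mul_comm]
end

section
/- Let N be a normal subgroup of a finite group G with quotient map x ↦ x̄, let S̄₁ ⊆ G/N with 1̄ ∉ S̄₁ (so Cay(G/N, S̄₁) is loopless), let S₂ ⊆ N, and let S₁ = {g ∈ G : ḡ ∈ S̄₁}. Then Cay(G, S₁ ∪ S₂) is isomorphic to the digraph wreath product Cay(G/N, S̄₁) ≀ Cay(N, S₂), and W(G,N) is contained in Aut(Cay(G, S₁ ∪ S₂)). -/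
/-! Common definitions: Cayley digraphs, digraph automorphism groups,
DRRs/GRRs, detecting groups, the regular representation, the group `W(G,N)`,
wreath and cartesian products of digraphs, and the wreath product of groups. -/

universe u

/-! An edge of `Cay(G, S₁ ∪ S₂)` is either an `S₁`-edge, which only depends on the cosets of its
ends, or an `S₂`-edge, which stays inside one coset of `N`. Writing `x` as `(x̄, x · (out x̄)⁻¹)`
turns this into the adjacency of the wreath product. A permutation `x ↦ x c f(x̄)` in `W(G,N)`
acts on `G/N` as right multiplication by `c̄` and on each coset of `N` as right multiplication by a
single element, and right multiplications are automorphisms of every Cayley digraph. -/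
section CayleyDigraph

variable {G : Type*} [Group G]

theorem cayAdj_iff_mul_inv_mem {S : Set G} {x y : G} : cayAdj S x y ↔ y * x⁻¹ ∈ S :=
  ⟨fun ⟨s, hs, hy⟩ => by rwa [hy, mul_inv_cancel_right],
    fun h => ⟨y * x⁻¹, h, (inv_mul_cancel_right y x).symm⟩⟩

theorem cayAdj_union {S S' : Set G} {x y : G} :
    cayAdj (S ∪ S') x y ↔ cayAdj S x y ∨ cayAdj S' x y := by
  simp only [cayAdj_iff_mul_inv_mem, Set.mem_union]

theorem cayAdj_mul_right {S : Set G} (g x y : G) :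
    cayAdj S (x * g) (y * g) ↔ cayAdj S x y := by
  simp only [cayAdj_iff_mul_inv_mem, mul_inv_rev, mul_assoc, mul_inv_cancel_left]

theorem cayAdj_preimage_iff {H : Type*} [Group H] (f : G →* H) {T : Set H} {x y : G} :
    cayAdj (f ⁻¹' T) x y ↔ cayAdj T (f x) (f y) := by
  simp only [cayAdj_iff_mul_inv_mem, Set.mem_preimage, map_mul, map_inv]

end CayleyDigraph

section NormalSubgroup

variable {G : Type*} [Group G] (N : Subgroup G) [N.Normal]

/-- Unlike `Subgroup.groupEquivQuotientProdSubgroup`, the `N`-coordinate `x · (out x̄)⁻¹` stands to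
the left of the coset representative, so that left multiplication by `n ∈ N` acts on it by left
multiplication. -/
noncomputable def quotientProdNormalEquiv : G ≃ (G ⧸ N) × N where
  toFun x := ((x : G ⧸ N), ⟨x * (x : G ⧸ N).out⁻¹, by
    rw [← QuotientGroup.eq_one_iff, QuotientGroup.mk_mul, QuotientGroup.mk_inv,
      QuotientGroup.out_eq', mul_inv_cancel]⟩)
  invFun p := p.2 * p.1.out
  left_inv x := by simp
  right_inv p := by
    have hmk : ((p.2 * p.1.out : G) : G ⧸ N) = p.1 := by
      rw [QuotientGroup.mk_mul, (QuotientGroup.eq_one_iff _).mpr p.2.2, one_mul,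
        QuotientGroup.out_eq']
    ext
    · exact hmk
    · simp [hmk]

@[simp]
theorem quotientProdNormalEquiv_snd (x : G) :
    ((quotientProdNormalEquiv N x).2 : G) = x * (x : G ⧸ N).out⁻¹ := rfl

variable {N}

theorem mk_eq_of_cayAdj_image_val {S : Set N} {x y : G} (h : cayAdj (Subtype.val '' S) x y) :
    (x : G ⧸ N) = y := by
  obtain ⟨_, ⟨n, -, rfl⟩, rfl⟩ := h
  rw [QuotientGroup.mk_mul, (QuotientGroup.eq_one_iff _).mpr n.2, one_mul]

theorem cayAdj_image_val_iff {S : Set N} {x y : G} :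
    cayAdj (Subtype.val '' S) x y ↔ (x : G ⧸ N) = y ∧
      cayAdj S (quotientProdNormalEquiv N x).2 (quotientProdNormalEquiv N y).2 := by
  constructor
  · intro h
    have hxy := mk_eq_of_cayAdj_image_val h
    obtain ⟨_, ⟨n, hn, rfl⟩, rfl⟩ := h
    refine ⟨hxy, n, hn, Subtype.ext ?_⟩
    simp [← hxy, mul_assoc]
  · rintro ⟨hxy, n, hn, h⟩
    refine ⟨n, ⟨n, hn, rfl⟩, ?_⟩
    have := congrArg (fun m : N => (m : G) * (x : G ⧸ N).out) h
    simpa [← hxy, mul_assoc] using this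

end NormalSubgroup

section CayleyWreath

variable {G : Type*} [Group G] {N : Subgroup G} [N.Normal]

theorem cayAdj_iff_wreathAdj (T : Set (G ⧸ N)) (S : Set N) (x y : G) :
    cayAdj ({g : G | QuotientGroup.mk g ∈ T} ∪ Subtype.val '' S) x y ↔
      wreathAdj (cayAdj T) (cayAdj S)
        (quotientProdNormalEquiv N x) (quotientProdNormalEquiv N y) :=
  cayAdj_union.trans <| or_congr (cayAdj_preimage_iff (QuotientGroup.mk' N)) cayAdj_image_val_iff

theorem Wset_subset_digraphAut (T : Set (G ⧸ N)) (S : Set N) :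
    Wset G N ⊆ digraphAut (cayAdj ({g : G | QuotientGroup.mk g ∈ T} ∪ Subtype.val '' S)) := by
  rintro σ ⟨c, f, hf, hσ⟩ x y
  have hmk : ∀ z, (σ z : G ⧸ N) = z * c := fun z => by
    rw [hσ, QuotientGroup.mk_mul, (QuotientGroup.eq_one_iff _).mpr (hf _), mul_one,
      QuotientGroup.mk_mul]
  refine cayAdj_union.trans <| (or_congr ?_ ?_).trans cayAdj_union.symm
  · change cayAdj (QuotientGroup.mk' N ⁻¹' T) _ _ ↔ cayAdj (QuotientGroup.mk' N ⁻¹' T) _ _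
    simp only [cayAdj_preimage_iff, QuotientGroup.mk'_apply, hmk, cayAdj_mul_right]
  · constructor
    · intro h
      have hxy : (x : G ⧸ N) = y :=
        mul_right_cancel ((hmk x).symm.trans ((mk_eq_of_cayAdj_image_val h).trans (hmk y)))
      rwa [hσ, hσ, ← hxy, mul_assoc, mul_assoc, cayAdj_mul_right] at h
    · intro h
      rw [hσ, hσ, ← mk_eq_of_cayAdj_image_val h, mul_assoc, mul_assoc, cayAdj_mul_right]
      exact h

end CayleyWreath

theorem cayley_iso_wreath_and_Wset_le_aut_general {G : Type*} [Group G]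
    (N : Subgroup G) [N.Normal]
    (T : Set (G ⧸ N)) (S₂ : Set ↥N) :
    (∃ e : G ≃ (G ⧸ N) × ↥N,
        ∀ x y : G,
          cayAdj ({g : G | QuotientGroup.mk g ∈ T} ∪ (Subtype.val '' S₂)) x y ↔
            wreathAdj (cayAdj T) (cayAdj S₂) (e x) (e y)) ∧
    ∀ σ ∈ Wset G N,
      σ ∈ digraphAut
        (cayAdj ({g : G | QuotientGroup.mk g ∈ T} ∪ (Subtype.val '' S₂))) :=
  ⟨⟨quotientProdNormalEquiv N, cayAdj_iff_wreathAdj T S₂⟩, Wset_subset_digraphAut T S₂⟩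

/-- With `S₁ = {g ∈ G : ḡ ∈ S̄₁}`, the Cayley digraph
`Cay(G, S₁ ∪ S₂)` is isomorphic to the wreath product
`Cay(G/N, S̄₁) ≀ Cay(N, S₂)`, and `W(G,N) ⊆ Aut(Cay(G, S₁ ∪ S₂))`. -/
theorem cayley_iso_wreath_and_Wset_le_aut {G : Type*} [Group G] [Fintype G]
    (N : Subgroup G) [N.Normal]
    (T : Set (G ⧸ N)) (hT : (1 : G ⧸ N) ∉ T) (S₂ : Set ↥N) :
    (∃ e : G ≃ (G ⧸ N) × ↥N,
        ∀ x y : G,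
          cayAdj ({g : G | QuotientGroup.mk g ∈ T} ∪ (Subtype.val '' S₂)) x y ↔
            wreathAdj (cayAdj T) (cayAdj S₂) (e x) (e y)) ∧
    ∀ σ ∈ Wset G N,
      σ ∈ digraphAut
        (cayAdj ({g : G | QuotientGroup.mk g ∈ T} ∪ (Subtype.val '' S₂))) :=
  cayley_iso_wreath_and_Wset_le_aut_general N T S₂
end

section
/- Let N be a normal subgroup of a finite group G with quotient map x ↦ x̄, let S̄₁ ⊆ G/N with 1̄ ∉ S̄₁, let S₂ ⊆ N with 1 ∉ S₂, and let S₁ = {g ∈ G : ḡ ∈ S̄₁}. Assume Cay(G/N, S̄₁) is a DRR of G/N and Cay(N, S₂) is a DRR of N, and that it is not the case that both |G/N| = 2 and |N| = 2. Then Aut(Cay(G, S₁ ∪ S₂)) = W(G,N). -/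
/-! Common definitions: Cayley digraphs, digraph automorphism groups,
DRRs/GRRs, detecting groups, the regular representation, the group `W(G,N)`,
wreath and cartesian products of digraphs, and the wreath product of groups. -/

universe u

/-!
Arcs of `Cay(G, S₁ ∪ S₂)` between different `N`-cosets are dictated by `S̄₁`, arcs inside a
coset by `S₂`: the digraph is the wreath product `Cay(G/N, S̄₁) ≀ Cay(N, S₂)`. The heart of the
proof is that every automorphism `σ` maps `N`-cosets to `N`-cosets.
* If `|G/N| = 2`, then `S̄₁` is empty or all of `G/N ∖ {1}`, and since `Cay(N, S₂)` is a DRR with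
  `|N| > 2`, the arcs (resp. the non-arcs) inside cosets generate `N`; so cosets are the classes
  of an `Aut`-invariant relation.
* Otherwise, if `σ` separated two vertices `x, y` of one coset, the DRR `Cay(G/N, S̄₁)` has no
  twins, so some coset `d` distinguishes the cosets of `σ x` and `σ y`. The vertices
  distinguishing `x` from `y` lie in one coset, those distinguishing `σ x` from `σ y` contain all
  of `d`; counting forces both sets to be full cosets, and then `σ x ∈ d`, absurd.
Once cosets are preserved, `σ` induces an automorphism of the DRR `Cay(G/N, S̄₁)`, hence a right
translation, and on each coset an automorphism of the DRR `Cay(N, S₂)` fixing a point, hence the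
identity. These two facts characterise `W(G,N)`.
-/

section Digraph

variable {V : Type*} {A : V → V → Prop}

def AreTwins (A : V → V → Prop) (a b : V) : Prop :=
  (A a a ↔ A b b) ∧ (A a b ↔ A b a) ∧
    ∀ d, d ≠ a → d ≠ b → (A d a ↔ A d b) ∧ (A a d ↔ A b d)

theorem AreTwins.swap_mem_digraphAut [DecidableEq V] {a b : V} (h : AreTwins A a b) :
    Equiv.swap a b ∈ digraphAut A := by
  obtain ⟨hloop, hab, hd⟩ := h
  intro p r
  simp only [Equiv.swap_apply_def]
  split_ifs <;> grind

def distinguishers (A : V → V → Prop) (x y : V) : Set V :=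
  {z | ¬((A z x ↔ A z y) ∧ (A x z ↔ A y z))}

theorem distinguishers_apply {σ : Equiv.Perm V} (hσ : σ ∈ digraphAut A) (x y : V) :
    distinguishers A (σ x) (σ y) = σ '' distinguishers A x y := by
  rw [Equiv.image_eq_preimage_symm]
  ext z
  have hz : z = σ (σ.symm z) := (σ.apply_symm_apply z).symm
  simp only [distinguishers, Set.mem_preimage]
  change ¬ _ ↔ ¬ _
  rw [hz, hσ, hσ, hσ, hσ, σ.symm_apply_apply]

theorem adj_of_adj_of_ncard_eq [Finite V] {a b : V}
    (hdeg : {z | A z a}.ncard = {z | A z b}.ncard) (hb : ¬ A b b)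
    (hin : ∀ d, d ≠ a → d ≠ b → A d b → A d a) (hba : A b a) : A a b := by
  by_contra hab
  have hsub : {z | A z b} ⊆ {z | A z a} \ {b} := fun z hz =>
    ⟨hin z (by rintro rfl; exact hab hz) (by rintro rfl; exact hb hz) hz,
      by rintro rfl; exact hb hz⟩
  have := (Set.ncard_le_ncard hsub).trans_lt
    (Set.ncard_sdiff_singleton_lt_of_mem (s := {z | A z a}) hba)
  omega

end Digraph

theorem IsDRR.eq_one_of_apply_eq {H V : Type*} [Group H] {A : V → V → Prop}
    (h : IsDRR H A) {σ : Equiv.Perm V} (hσ : σ ∈ digraphAut A) {z : V} (hz : σ z = z) :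
    σ = 1 := by
  obtain ⟨μ, -, huniq⟩ := h.2 z z
  exact congrArg Subtype.val ((huniq ⟨σ, hσ⟩ hz).trans (huniq 1 rfl).symm)

theorem IsDRR.not_areTwins {H V : Type*} [Group H] {A : V → V → Prop} (h : IsDRR H A)
    {a b c : V} (hab : a ≠ b) (hca : c ≠ a) (hcb : c ≠ b) : ¬ AreTwins A a b := by
  classical
  exact fun htw => hab (Equiv.swap_eq_one_iff.mp
    (h.eq_one_of_apply_eq htw.swap_mem_digraphAut (Equiv.swap_apply_of_ne_of_ne hca hcb)))

theorem exists_ne_ne_of_two_lt_card {α : Type*} [Finite α] (h : 2 < Nat.card α) (x y : α) :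
    ∃ z, z ≠ x ∧ z ≠ y :=
  ENat.exists_ne_ne_of_three_le (by rw [ENat.card_eq_coe_natCard]; exact_mod_cast h) x y

theorem apply_smul_eq_of_closure_eq_top {M β α : Type*} [Group M] [MulAction M β] {f : β → α}
    {C : Set M} (hC : Subgroup.closure C = ⊤) (h : ∀ c ∈ C, ∀ z, f (c • z) = f z)
    (n : M) (z : β) : f (n • z) = f z := by
  have hn : n ∈ Subgroup.closure C := hC ▸ Subgroup.mem_top n
  induction hn using Subgroup.closure_induction generalizing z with
  | mem c hc => exact h c hc z
  | one => rw [one_smul]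
  | mul m m' _ _ ihm ihm' => rw [mul_smul, ihm, ihm']
  | inv m _ ihm => rw [← ihm, smul_inv_smul]

section Cayley

variable {H : Type*} [Group H]

theorem cayAdj_iff_s10 {S : Set H} {x y : H} : cayAdj S x y ↔ y * x⁻¹ ∈ S :=
  ⟨by rintro ⟨s, hs, rfl⟩; simpa using hs, fun h => ⟨y * x⁻¹, h, by group⟩⟩

theorem cayAdj_self_iff {S : Set H} {x : H} : cayAdj S x x ↔ 1 ∈ S := by
  rw [cayAdj_iff_s10, mul_inv_cancel]

theorem mulRight_mem_digraphAut (S : Set H) (c : H) :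
    Equiv.mulRight c ∈ digraphAut (cayAdj S) := by
  intro x y
  simp only [Equiv.coe_mulRight, cayAdj_iff_s10, mul_inv_rev, mul_assoc, mul_inv_cancel_left]

theorem ncard_setOf_cayAdj_left (S : Set H) (a : H) : {z | cayAdj S z a}.ncard = S.ncard := by
  have : {z | cayAdj S z a} = (fun s => s⁻¹ * a) '' S := by
    ext z
    simp only [Set.mem_image, cayAdj_iff_s10]
    exact ⟨fun h => ⟨_, h, by group⟩, by rintro ⟨s, hs, rfl⟩; simpa using hs⟩
  rw [this, Set.ncard_image_of_injective _ fun s t h => by simpa using h]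

theorem IsDRR.apply_eq_mul {S : Set H} (h : IsDRR H (cayAdj S)) {σ : Equiv.Perm H}
    (hσ : σ ∈ digraphAut (cayAdj S)) (x : H) : σ x = x * σ 1 := by
  have hfix : ((Equiv.mulRight (σ 1))⁻¹ * σ) 1 = 1 := by simp
  have := h.eq_one_of_apply_eq (mul_mem (inv_mem (mulRight_mem_digraphAut S _)) hσ) hfix
  rw [inv_mul_eq_one] at this
  rw [← this]
  simp

theorem IsDRR.exists_mem_distinguishers [Finite H] {T : Set H} (h : IsDRR H (cayAdj T))
    (hT : (1 : H) ∉ T) (hcard : 2 < Nat.card H) {a b : H} (hab : a ≠ b) :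
    ∃ d, d ≠ a ∧ d ≠ b ∧ d ∈ distinguishers (cayAdj T) a b := by
  by_contra! htw
  have hloop : ∀ x, ¬ cayAdj T x x := fun _ => cayAdj_self_iff.not.mpr hT
  have hin : ∀ {a b}, (∀ d, d ≠ a → d ≠ b → d ∉ distinguishers (cayAdj T) a b) →
      cayAdj T b a → cayAdj T a b := fun {a b} htw =>
    adj_of_adj_of_ncard_eq (by rw [ncard_setOf_cayAdj_left, ncard_setOf_cayAdj_left])
      (hloop b) fun d hda hdb => by
        have := htw d hda hdb
        simp only [distinguishers, Set.mem_ofPred_eq, not_not] at this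
        exact this.1.mpr
  have htw' : ∀ d, d ≠ b → d ≠ a → d ∉ distinguishers (cayAdj T) b a := fun d hdb hda hd =>
    htw d hda hdb fun ⟨h1, h2⟩ => hd ⟨h1.symm, h2.symm⟩
  obtain ⟨c, hca, hcb⟩ := exists_ne_ne_of_two_lt_card hcard a b
  refine h.not_areTwins hab hca hcb ⟨iff_of_false (hloop a) (hloop b), ⟨hin htw', hin htw⟩,
    fun d hda hdb => ?_⟩
  simpa [distinguishers] using htw d hda hdb

theorem mem_digraphAut_of_mul_inv_mem {S : Set H} {M : Subgroup H} {b : Prop}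
    (hM : ∀ m ∉ M, m ∈ S ↔ b) {φ : Equiv.Perm H} (hφM : ∀ x, φ x * x⁻¹ ∈ M)
    (hφ : ∀ p r, r * p⁻¹ ∈ M → φ r * (φ p)⁻¹ = r * p⁻¹) : φ ∈ digraphAut (cayAdj S) := by
  intro p r
  rw [cayAdj_iff_s10, cayAdj_iff_s10]
  by_cases hpr : r * p⁻¹ ∈ M
  · rw [hφ p r hpr]
  · have : φ r * (φ p)⁻¹ ∉ M := fun h => hpr <| by
      have e : r * p⁻¹ = (φ r * r⁻¹)⁻¹ * (φ r * (φ p)⁻¹) * (φ p * p⁻¹) := by group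
      rw [e]
      exact mul_mem (mul_mem (inv_mem (hφM r)) h) (hφM p)
    rw [hM _ this, hM _ hpr]

theorem ofSubtype_mulRight_mem_digraphAut {S : Set H} {M : Subgroup H} [DecidablePred (· ∈ M)]
    {b : Prop} (hM : ∀ m ∉ M, m ∈ S ↔ b) {m₀ : H} (hm₀ : m₀ ∈ M) :
    Equiv.Perm.ofSubtype (Equiv.mulRight (⟨m₀, hm₀⟩ : M)) ∈ digraphAut (cayAdj S) := by
  have hin : ∀ x ∈ M, Equiv.Perm.ofSubtype (Equiv.mulRight (⟨m₀, hm₀⟩ : M)) x = x * m₀ :=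
    fun x hx => Equiv.Perm.ofSubtype_apply_of_mem _ hx
  have hout : ∀ x ∉ M, Equiv.Perm.ofSubtype (Equiv.mulRight (⟨m₀, hm₀⟩ : M)) x = x :=
    fun x hx => Equiv.Perm.ofSubtype_apply_of_not_mem _ hx
  refine mem_digraphAut_of_mul_inv_mem hM (fun x => ?_) fun p r hpr => ?_
  · by_cases hx : x ∈ M
    · rw [hin x hx]
      exact mul_mem (mul_mem hx hm₀) (inv_mem hx)
    · rw [hout x hx, mul_inv_cancel]
      exact one_mem _
  · by_cases hp : p ∈ M
    · have hr : r ∈ M := by simpa using mul_mem hpr hp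
      rw [hin p hp, hin r hr]
      group
    · have hr : r ∉ M := fun hr => hp (by simpa using mul_mem (inv_mem hpr) hr)
      rw [hout p hp, hout r hr]

/-- If `M ≠ ⊥`, `ofSubtype_mulRight_mem_digraphAut` gives a nontrivial automorphism fixing a vertex
outside `M`; if `M = ⊥`, the digraph is complete or empty up to loops, so all vertices are twins. -/
theorem IsDRR.eq_top_of_forall_notMem_mem_iff [Finite H] {S : Set H} (h : IsDRR H (cayAdj S))
    (hcard : 2 < Nat.card H) {M : Subgroup H} {b : Prop} (hM : ∀ m ∉ M, m ∈ S ↔ b) :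
    M = ⊤ := by
  classical
  by_contra hne
  obtain ⟨z, hz⟩ : ∃ z, z ∉ M := by
    by_contra! hall
    exact hne (M.eq_top_iff'.mpr hall)
  rcases M.bot_or_exists_ne_one with rfl | ⟨m₀, hm₀, hm₀1⟩
  · have hadj : ∀ p r, p ≠ r → (cayAdj S p r ↔ b) := fun p r hpr => by
      rw [cayAdj_iff_s10, hM]
      rwa [Subgroup.mem_bot, mul_inv_eq_one, eq_comm]
    have hz1 : (1 : H) ≠ z := fun h1 => hz (h1 ▸ one_mem _)
    obtain ⟨c, hc1, hcz⟩ := exists_ne_ne_of_two_lt_card hcard 1 z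
    refine h.not_areTwins hz1 hc1 hcz ⟨?_, ?_, fun d hd1 hdz => ?_⟩
    · rw [cayAdj_self_iff, cayAdj_self_iff]
    · rw [hadj _ _ hz1, hadj _ _ hz1.symm]
    · rw [hadj _ _ hd1, hadj _ _ hdz, hadj _ _ hd1.symm, hadj _ _ hdz.symm]
      exact ⟨Iff.rfl, Iff.rfl⟩
  · have hφ := ofSubtype_mulRight_mem_digraphAut hM hm₀
    have h1 := congrArg (· 1)
      (h.eq_one_of_apply_eq hφ (Equiv.Perm.ofSubtype_apply_of_not_mem _ hz))
    rw [Equiv.Perm.ofSubtype_apply_of_mem _ (one_mem M)] at h1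
    exact hm₀1 (by simpa using h1)

end Cayley

open scoped Pointwise in
theorem ncard_setOf_mk_eq {G : Type*} [Group G] {N : Subgroup G} (q : G ⧸ N) :
    {z : G | (z : G ⧸ N) = q}.ncard = Nat.card N := by
  obtain ⟨w, rfl⟩ := QuotientGroup.mk_surjective q
  have : {z : G | (z : G ⧸ N) = w} = w • (N : Set G) := by
    ext z
    rw [Set.mem_ofPred, eq_comm, QuotientGroup.eq, mem_leftCoset_iff, SetLike.mem_coe]
  rw [this, Set.ncard_smul_set, ← Nat.card_coe_set_eq, SetLike.coe_sort_coe]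

section Wreath

variable {G : Type*} [Group G] {N : Subgroup G} [N.Normal] {T : Set (G ⧸ N)} {S₂ : Set N}
  {σ : Equiv.Perm G}

/-- The connection set `S₁ ∪ S₂`, where `S₁` is the full preimage of `T = S̄₁`. -/
def wreathSet (T : Set (G ⧸ N)) (S₂ : Set N) : Set G :=
  {g | (g : G ⧸ N) ∈ T} ∪ Subtype.val '' S₂

theorem cayAdj_wreathSet_of_mk_ne {x y : G} (hxy : (x : G ⧸ N) ≠ y) :
    cayAdj (wreathSet T S₂) x y ↔ cayAdj T x y := by
  rw [cayAdj_iff_s10, cayAdj_iff_s10, wreathSet, Set.mem_union, Set.mem_ofPred, QuotientGroup.mk_mul,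
    QuotientGroup.mk_inv, or_iff_left]
  rintro ⟨n, -, hn⟩
  exact hxy (QuotientGroup.eq_iff_div_mem.mpr (by simpa [hn, div_eq_mul_inv] using inv_mem n.2))

theorem cayAdj_wreathSet_mul (hT : (1 : G ⧸ N) ∉ T) (n m : N) (x : G) :
    cayAdj (wreathSet T S₂) (n * x) (m * x) ↔ cayAdj S₂ n m := by
  have e : (m : G) * x * (n * x)⁻¹ = ↑(m * n⁻¹) := by push_cast; group
  rw [cayAdj_iff_s10, cayAdj_iff_s10, e, wreathSet, Set.mem_union, Set.mem_ofPred,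
    (QuotientGroup.eq_one_iff _).mpr (m * n⁻¹).2, Subtype.val_injective.mem_set_image]
  exact or_iff_right hT

theorem mem_distinguishers_wreathSet_iff {x y z : G} (hzx : (z : G ⧸ N) ≠ x)
    (hzy : (z : G ⧸ N) ≠ y) :
    z ∈ distinguishers (cayAdj (wreathSet T S₂)) x y ↔
      (z : G ⧸ N) ∈ distinguishers (cayAdj T) x y := by
  simp only [distinguishers, Set.mem_ofPred_eq, cayAdj_wreathSet_of_mk_ne hzx,
    cayAdj_wreathSet_of_mk_ne hzy, cayAdj_wreathSet_of_mk_ne hzx.symm,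
    cayAdj_wreathSet_of_mk_ne hzy.symm]

theorem mk_apply_eq_of_closure_eq_top {f : G → G} {C : Set N} (hC : Subgroup.closure C = ⊤)
    (h : ∀ c ∈ C, ∀ z, (f (c * z) : G ⧸ N) = f z) {x y : G} (hxy : (x : G ⧸ N) = y) :
    (f x : G ⧸ N) = f y := by
  have hyx : y / x ∈ N := QuotientGroup.eq_iff_div_mem.mp hxy.symm
  have := apply_smul_eq_of_closure_eq_top (f := fun z => (f z : G ⧸ N)) hC
    (fun c hc z => h c hc z) ⟨y / x, hyx⟩ x
  simpa [Subgroup.smul_def] using this.symm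

theorem mk_apply_eq_of_eq_empty [Finite G] (hT0 : T = ∅) (hDRR₂ : IsDRR N (cayAdj S₂))
    (hN : 2 < Nat.card N) (hσ : σ ∈ digraphAut (cayAdj (wreathSet T S₂))) {x y : G}
    (hxy : (x : G ⧸ N) = y) : (σ x : G ⧸ N) = σ y := by
  have hT : (1 : G ⧸ N) ∉ T := hT0 ▸ Set.notMem_empty 1
  have hmk : ∀ {z w : G}, cayAdj (wreathSet T S₂) z w → (z : G ⧸ N) = w := fun {z w} h => by
    by_contra hne
    rw [cayAdj_wreathSet_of_mk_ne hne, hT0, cayAdj_iff_s10] at h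
    exact h
  have htop : Subgroup.closure S₂ = ⊤ := hDRR₂.eq_top_of_forall_notMem_mem_iff hN (b := False)
    fun m hm => iff_false_intro fun h => hm (Subgroup.subset_closure h)
  refine mk_apply_eq_of_closure_eq_top htop (fun c hc z => (hmk ((hσ _ _).mpr ?_)).symm) hxy
  simpa using (cayAdj_wreathSet_mul hT 1 c z).mpr (by simpa [cayAdj_iff_s10] using hc)

theorem mk_apply_eq_of_forall_mem_iff_ne_one [Finite G] (hTc : ∀ q, q ∈ T ↔ q ≠ 1)
    (hDRR₂ : IsDRR N (cayAdj S₂)) (hN : 2 < Nat.card N)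
    (hσ : σ ∈ digraphAut (cayAdj (wreathSet T S₂))) {x y : G} (hxy : (x : G ⧸ N) = y) :
    (σ x : G ⧸ N) = σ y := by
  have hT : (1 : G ⧸ N) ∉ T := fun h => (hTc 1).mp h rfl
  -- Vertices of different cosets are mutually adjacent, so `R` never leaves a coset.
  let R : G → G → Prop := fun z w =>
    z ≠ w ∧ ¬(cayAdj (wreathSet T S₂) z w ∧ cayAdj (wreathSet T S₂) w z)
  have hmk : ∀ {z w : G}, R z w → (z : G ⧸ N) = w := by
    rintro z w ⟨-, hzw⟩
    by_contra hne
    apply hzw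
    rw [cayAdj_wreathSet_of_mk_ne hne, cayAdj_wreathSet_of_mk_ne (Ne.symm hne), cayAdj_iff_s10,
      cayAdj_iff_s10, hTc, hTc, Ne, Ne, mul_inv_eq_one, mul_inv_eq_one]
    exact ⟨Ne.symm hne, hne⟩
  have hσR : ∀ {z w : G}, R z w → R (σ z) (σ w) := fun ⟨h1, h2⟩ =>
    ⟨σ.injective.ne h1, by rwa [hσ, hσ]⟩
  let C : Set N := {m | m ≠ 1 ∧ ¬(m ∈ S₂ ∧ m⁻¹ ∈ S₂)}
  have htop : Subgroup.closure C = ⊤ := hDRR₂.eq_top_of_forall_notMem_mem_iff hN (b := True)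
    fun m hm => iff_true_intro <| by
      by_contra hmS
      exact hm (Subgroup.subset_closure ⟨fun h1 => hm (h1 ▸ one_mem _), fun h => hmS h.1⟩)
  have hR : ∀ c ∈ C, ∀ z, R z (c * z) := by
    rintro c ⟨hc1, hcS⟩ z
    refine ⟨fun h => hc1 (Subtype.ext (by simpa using h)), ?_⟩
    have e₁ : cayAdj (wreathSet T S₂) z (c * z) ↔ c ∈ S₂ := by
      simpa [cayAdj_iff_s10] using cayAdj_wreathSet_mul hT 1 c z
    have e₂ : cayAdj (wreathSet T S₂) (c * z) z ↔ c⁻¹ ∈ S₂ := by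
      simpa [cayAdj_iff_s10] using cayAdj_wreathSet_mul hT c 1 z
    rwa [e₁, e₂]
  exact mk_apply_eq_of_closure_eq_top htop (fun c hc z => (hmk (hσR (hR c hc z))).symm) hxy

theorem mk_apply_eq_of_card_quotient_eq_two [Finite G] (hT : (1 : G ⧸ N) ∉ T)
    (hK : Nat.card (G ⧸ N) = 2) (hDRR₂ : IsDRR N (cayAdj S₂)) (hN : 2 < Nat.card N)
    (hσ : σ ∈ digraphAut (cayAdj (wreathSet T S₂))) {x y : G} (hxy : (x : G ⧸ N) = y) :
    (σ x : G ⧸ N) = σ y := by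
  rcases T.eq_empty_or_nonempty with hT0 | ⟨t, ht⟩
  · exact mk_apply_eq_of_eq_empty hT0 hDRR₂ hN hσ hxy
  obtain ⟨u, -, huniq⟩ := (Nat.card_eq_two_iff' 1).mp hK
  refine mk_apply_eq_of_forall_mem_iff_ne_one
    (fun q => ⟨fun hq h1 => hT (h1 ▸ hq), fun hq => ?_⟩) hDRR₂ hN hσ hxy
  rwa [huniq q hq, ← huniq t fun h => hT (h ▸ ht)]

theorem mk_apply_eq_of_card_quotient_ne_two [Finite G] (hT : (1 : G ⧸ N) ∉ T)
    (hK : Nat.card (G ⧸ N) ≠ 2) (hDRR₁ : IsDRR (G ⧸ N) (cayAdj T))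
    (hσ : σ ∈ digraphAut (cayAdj (wreathSet T S₂))) {x y : G} (hxy : (x : G ⧸ N) = y) :
    (σ x : G ⧸ N) = σ y := by
  by_contra hab
  have hK3 : 2 < Nat.card (G ⧸ N) := by
    have := Finite.one_lt_card_iff_nontrivial.mpr (nontrivial_of_ne _ _ hab)
    omega
  obtain ⟨d, hda, hdb, hd⟩ := hDRR₁.exists_mem_distinguishers hT hK3 hab
  set D := distinguishers (cayAdj (wreathSet T S₂)) x y
  have hD : D ⊆ {z : G | (z : G ⧸ N) = x} := fun z hz => by
    by_contra hzx
    rw [mem_distinguishers_wreathSet_iff hzx (hxy ▸ hzx), hxy] at hz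
    exact hz ⟨Iff.rfl, Iff.rfl⟩
  have hD' : {z : G | (z : G ⧸ N) = d} ⊆ σ '' D := fun z (hz : (z : G ⧸ N) = d) => by
    rw [← distinguishers_apply hσ, mem_distinguishers_wreathSet_iff (hz ▸ hda) (hz ▸ hdb), hz]
    exact hd
  have hσD : (σ '' D).ncard = D.ncard := Set.ncard_image_of_injective _ σ.injective
  have hDx := ncard_setOf_mk_eq (x : G ⧸ N)
  have hDd := ncard_setOf_mk_eq d
  have hDeq : D = {z : G | (z : G ⧸ N) = x} :=
    Set.eq_of_subset_of_ncard_le hD (by linarith [Set.ncard_le_ncard hD'])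
  have hσDeq : {z : G | (z : G ⧸ N) = d} = σ '' D :=
    Set.eq_of_subset_of_ncard_le hD' (by linarith [Set.ncard_le_ncard hD])
  have hσx : σ x ∈ {z : G | (z : G ⧸ N) = d} := hσDeq ▸ ⟨x, hDeq ▸ rfl, rfl⟩
  exact hda hσx.symm

theorem mk_apply_eq_of_mk_eq [Finite G] (hT : (1 : G ⧸ N) ∉ T)
    (hDRR₁ : IsDRR (G ⧸ N) (cayAdj T)) (hDRR₂ : IsDRR N (cayAdj S₂))
    (hcard : ¬ (Nat.card (G ⧸ N) = 2 ∧ Nat.card N = 2))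
    (hσ : σ ∈ digraphAut (cayAdj (wreathSet T S₂))) {x y : G} (hxy : (x : G ⧸ N) = y) :
    (σ x : G ⧸ N) = σ y := by
  rcases eq_or_ne x y with rfl | hne
  · rfl
  by_cases hK : Nat.card (G ⧸ N) = 2
  · have hN : 2 < Nat.card N := by
      have hyx : y / x ∈ N := QuotientGroup.eq_iff_div_mem.mp hxy.symm
      have := Finite.one_lt_card_iff_nontrivial.mpr <| nontrivial_of_ne (⟨y / x, hyx⟩ : N) 1
        fun h => hne (div_eq_one.mp (congrArg Subtype.val h)).symm
      have := fun h => hcard ⟨hK, h⟩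
      omega
    exact mk_apply_eq_of_card_quotient_eq_two hT hK hDRR₂ hN hσ hxy
  · exact mk_apply_eq_of_card_quotient_ne_two hT hK hDRR₁ hσ hxy

theorem mk_apply_eq_mk_mul_mk_apply_one [Finite G] (hT : (1 : G ⧸ N) ∉ T)
    (hDRR₁ : IsDRR (G ⧸ N) (cayAdj T)) (hDRR₂ : IsDRR N (cayAdj S₂))
    (hcard : ¬ (Nat.card (G ⧸ N) = 2 ∧ Nat.card N = 2))
    (hσ : σ ∈ digraphAut (cayAdj (wreathSet T S₂))) (z : G) :
    (σ z : G ⧸ N) = z * σ 1 := by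
  have hA : ∀ {σ : Equiv.Perm G}, σ ∈ digraphAut (cayAdj (wreathSet T S₂)) →
      ∀ {x y : G}, (x : G ⧸ N) = y → (σ x : G ⧸ N) = σ y :=
    fun hσ _ _ => mk_apply_eq_of_mk_eq hT hDRR₁ hDRR₂ hcard hσ
  have hA' : ∀ {x y : G}, (σ x : G ⧸ N) = σ y → (x : G ⧸ N) = y := fun h => by
    simpa using hA (inv_mem hσ) h
  let τ : Equiv.Perm (G ⧸ N) := Quotient.congr σ fun a b => by
    rw [QuotientGroup.leftRel_apply, QuotientGroup.leftRel_apply, ← QuotientGroup.eq,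
      ← QuotientGroup.eq]
    exact ⟨hA hσ, hA'⟩
  have hτ : ∀ u : G, τ u = (σ u : G ⧸ N) := fun u => rfl
  have hτ_mem : τ ∈ digraphAut (cayAdj T) := by
    intro q r
    induction q using QuotientGroup.induction_on with | H u => ?_
    induction r using QuotientGroup.induction_on with | H v => ?_
    rw [hτ, hτ]
    by_cases he : (u : G ⧸ N) = v
    · rw [he, hA hσ he, cayAdj_self_iff, cayAdj_self_iff]
    · rw [← cayAdj_wreathSet_of_mk_ne (S₂ := S₂) he,
        ← cayAdj_wreathSet_of_mk_ne fun h => he (hA' h)]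
      exact hσ u v
  have := hDRR₁.apply_eq_mul hτ_mem z
  rwa [hτ, ← QuotientGroup.mk_one, hτ] at this

theorem apply_mul_eq_mul_apply (hT : (1 : G ⧸ N) ∉ T) (hDRR₂ : IsDRR N (cayAdj S₂))
    (hσ : σ ∈ digraphAut (cayAdj (wreathSet T S₂)))
    (hmk : ∀ z, (σ z : G ⧸ N) = z * σ 1) (n : N) (x : G) : σ (n * x) = n * σ x := by
  let ρ := (Equiv.mulRight (σ x))⁻¹ * σ * Equiv.mulRight x
  have hρ : ∀ z, ρ z = σ (z * x) * (σ x)⁻¹ := fun z => by simp [ρ, Equiv.Perm.mul_apply]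
  have hρ_mem : ρ ∈ digraphAut (cayAdj (wreathSet T S₂)) :=
    mul_mem (mul_mem (inv_mem (mulRight_mem_digraphAut _ _)) hσ) (mulRight_mem_digraphAut _ _)
  have hρN : ∀ z, ρ z ∈ N ↔ z ∈ N := fun z => by
    rw [hρ, ← QuotientGroup.eq_one_iff, ← QuotientGroup.eq_one_iff (N := N) z,
      QuotientGroup.mk_mul, QuotientGroup.mk_inv, hmk (z * x), hmk x, QuotientGroup.mk_mul,
      mul_assoc (z : G ⧸ N), mul_inv_cancel_right]
  have hcoe : ∀ n m : N, cayAdj S₂ n m ↔ cayAdj (wreathSet T S₂) n m := fun n m => by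
    simpa using (cayAdj_wreathSet_mul hT n m 1).symm
  have hρ' : ρ.subtypePerm hρN ∈ digraphAut (cayAdj S₂) := fun n m => by
    rw [hcoe, hcoe]
    exact hρ_mem n m
  have h1 := hDRR₂.eq_one_of_apply_eq hρ' (z := 1) (Subtype.ext (by simp [hρ]))
  have hn : ρ n = n := congrArg (fun π : Equiv.Perm N => (π n : G)) h1
  rwa [hρ, mul_inv_eq_iff_eq_mul] at hn

theorem mem_Wset_iff : σ ∈ Wset G N ↔
    (∀ (n : N) (x : G), σ (n * x) = n * σ x) ∧ ∀ x, (σ x : G ⧸ N) = x * σ 1 := by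
  constructor
  · rintro ⟨c, f, hf, hσ⟩
    have hf1 : ∀ q, (f q : G ⧸ N) = 1 := fun q => (QuotientGroup.eq_one_iff _).mpr (hf q)
    refine ⟨fun n x => ?_, fun x => ?_⟩
    · have : ((n * x : G) : G ⧸ N) = x := by
        rw [QuotientGroup.mk_mul, (QuotientGroup.eq_one_iff _).mpr n.2, one_mul]
      rw [hσ, hσ, this, mul_assoc, mul_assoc, mul_assoc]
    · rw [hσ x, hσ 1]
      simp only [QuotientGroup.mk_mul, hf1, one_mul, mul_one]
  · rintro ⟨hN, hmk⟩
    refine ⟨σ 1, fun q => (σ 1)⁻¹ * (q.out⁻¹ * σ q.out), fun q => ?_, fun x => ?_⟩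
    · rw [← QuotientGroup.eq_one_iff, QuotientGroup.mk_mul, QuotientGroup.mk_inv,
        QuotientGroup.mk_mul, QuotientGroup.mk_inv, hmk q.out, QuotientGroup.out_eq']
      group
    · have hu : x / (x : G ⧸ N).out ∈ N :=
        QuotientGroup.eq_iff_div_mem.mp (QuotientGroup.out_eq' _).symm
      have : σ x = x / (x : G ⧸ N).out * σ (x : G ⧸ N).out := by
        simpa using hN ⟨_, hu⟩ (x : G ⧸ N).out
      rw [this, div_eq_mul_inv]
      group

theorem mem_digraphAut_wreathSet (hN : ∀ (n : N) (x : G), σ (n * x) = n * σ x)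
    (hmk : ∀ x, (σ x : G ⧸ N) = x * σ 1) : σ ∈ digraphAut (cayAdj (wreathSet T S₂)) := by
  intro x y
  by_cases he : (x : G ⧸ N) = y
  · obtain ⟨n, rfl⟩ : ∃ n : N, (n : G) * x = y :=
      ⟨⟨y / x, QuotientGroup.eq_iff_div_mem.mp he.symm⟩, div_mul_cancel y x⟩
    rw [hN, cayAdj_iff_s10, cayAdj_iff_s10, mul_inv_cancel_right, mul_inv_cancel_right]
  · have he' : (σ x : G ⧸ N) ≠ σ y := by
      rw [hmk x, hmk y]
      exact (mul_left_injective _).ne he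
    rw [cayAdj_wreathSet_of_mk_ne he', cayAdj_wreathSet_of_mk_ne he, hmk x, hmk y]
    exact mulRight_mem_digraphAut T (σ 1 : G ⧸ N) x y

end Wreath

theorem aut_cayley_eq_Wset_general {G : Type*} [Group G] [Fintype G]
    (N : Subgroup G) [N.Normal]
    (T : Set (G ⧸ N)) (hT : (1 : G ⧸ N) ∉ T)
    (S₂ : Set ↥N)
    (hDRR₁ : IsDRR (G ⧸ N) (cayAdj T)) (hDRR₂ : IsDRR ↥N (cayAdj S₂))
    (hcard : ¬ (Nat.card (G ⧸ N) = 2 ∧ Nat.card ↥N = 2)) :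
    (↑(digraphAut (cayAdj ({g : G | QuotientGroup.mk g ∈ T} ∪ (Subtype.val '' S₂)))) :
        Set (Equiv.Perm G)) = Wset G N := by
  ext σ
  change σ ∈ digraphAut (cayAdj (wreathSet T S₂)) ↔ σ ∈ Wset G N
  rw [mem_Wset_iff]
  refine ⟨fun hσ => ?_, fun ⟨hN, hmk⟩ => mem_digraphAut_wreathSet hN hmk⟩
  have hmk := mk_apply_eq_mk_mul_mk_apply_one hT hDRR₁ hDRR₂ hcard hσ
  exact ⟨apply_mul_eq_mul_apply hT hDRR₂ hσ hmk, hmk⟩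

/-- If `Cay(G/N, S̄₁)` and `Cay(N, S₂)` are loopless DRRs and not both
`|G/N| = 2` and `|N| = 2`, then `Aut(Cay(G, S₁ ∪ S₂)) = W(G,N)`,
where `S₁ = {g ∈ G : ḡ ∈ S̄₁}`. -/
theorem aut_cayley_eq_Wset {G : Type*} [Group G] [Fintype G]
    (N : Subgroup G) [N.Normal]
    (T : Set (G ⧸ N)) (hT : (1 : G ⧸ N) ∉ T)
    (S₂ : Set ↥N) (hS₂ : (1 : ↥N) ∉ S₂)
    (hDRR₁ : IsDRR (G ⧸ N) (cayAdj T)) (hDRR₂ : IsDRR ↥N (cayAdj S₂))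
    (hcard : ¬ (Nat.card (G ⧸ N) = 2 ∧ Nat.card ↥N = 2)) :
    (↑(digraphAut (cayAdj ({g : G | QuotientGroup.mk g ∈ T} ∪ (Subtype.val '' S₂)))) :
        Set (Equiv.Perm G)) = Wset G N :=
  aut_cayley_eq_Wset_general N T hT S₂ hDRR₁ hDRR₂ hcard
end

section
/- Let N be a normal subgroup of a finite group G, and let Ĝ be the right regular representation of G inside the symmetric group on G. Then Ĝ equals its own normalizer in W(G,N) if and only if both of the following hold: (1) the center Z(N) is contained in the center Z(G), and (2) the order of the abelianization of G/N is relatively prime to |Z(N)|. -/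
/-! Common definitions: Cayley digraphs, digraph automorphism groups,
DRRs/GRRs, detecting groups, the regular representation, the group `W(G,N)`,
wreath and cartesian products of digraphs, and the wreath product of groups. -/

universe u

/-! Up to a right translation, an element of `W(G,N)` normalizing `Ĝ` is an automorphism
`x ↦ x·k(x̄)` with `k : G/N → N`, and multiplicativity is the cocycle identity
`k(xy) = y⁻¹k(x)y·k(y)`; so `Ĝ` is self-normalizing in `W(G,N)` iff every such cocycle is trivial.
Putting `y ∈ N` shows that a cocycle takes values in `Z(N)`. When `Z(N) ≤ Z(G)` the cocycles are
the homomorphisms `G/N → Z(N)`; they factor through the abelianization, so they vanish when the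
orders are coprime, while a common prime `p` gives a nontrivial one through a cyclic group of
order `p`. When `z ∈ Z(N)` is not central in `G`, conjugation by `z` gives the nontrivial
cocycle `x̄ ↦ x⁻¹zxz⁻¹`. -/

section RegularRep

variable {G : Type*} [Group G]

theorem mem_normalizer_regularRep_iff {σ : Equiv.Perm G} :
    σ ∈ Subgroup.normalizer (regularRep G) ↔ ∀ x y, σ (x * y) = σ x * (σ 1)⁻¹ * σ y := by
  rw [Subgroup.mem_normalizer_iff]
  constructor
  · intro h x y
    obtain ⟨g, hg⟩ := (h (Equiv.mulRight y)).mp ⟨y, fun _ => rfl⟩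
    have hx := hg (σ x)
    have h1 := hg (σ 1)
    simp only [Equiv.Perm.mul_apply, Equiv.Perm.inv_def, Equiv.symm_apply_apply,
      Equiv.coe_mulRight, one_mul] at hx h1
    rw [hx, h1]
    group
  · intro hσ ρ
    have conj (g : G) : σ * Equiv.mulRight g * σ⁻¹ = Equiv.mulRight ((σ 1)⁻¹ * σ g) := by
      ext t
      obtain ⟨x, rfl⟩ := σ.surjective t
      simp [hσ, mul_assoc]
    constructor
    · rintro ⟨g, hg⟩
      rw [show ρ = Equiv.mulRight g from Equiv.ext hg, conj]
      exact ⟨_, fun _ => rfl⟩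
    · rintro ⟨h, hh⟩
      refine ⟨σ⁻¹ (σ 1 * h), fun x => ?_⟩
      have : σ * ρ * σ⁻¹ = σ * Equiv.mulRight (σ⁻¹ (σ 1 * h)) * σ⁻¹ := by
        rw [conj, show σ * ρ * σ⁻¹ = Equiv.mulRight h from Equiv.ext hh]
        simp
      rw [mul_left_cancel (mul_right_cancel this)]
      rfl

end RegularRep

section Cocycle

variable {G : Type*} [Group G]

/-- The identity making `x ↦ x * k x̄` multiplicative. For `k` with values in `N` these maps are
exactly the elements of `W(G,N)` that normalize `Ĝ` and fix `1`. -/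
def IsConjCocycle (N : Subgroup G) (k : G ⧸ N → G) : Prop :=
  ∀ x y : G, k ↑(x * y) = y⁻¹ * k x * y * k y

def HasOnlyTrivialConjCocycles (N : Subgroup G) : Prop :=
  ∀ k : G ⧸ N → G, (∀ q, k q ∈ N) → IsConjCocycle N k → k = 1

variable {N : Subgroup G} [N.Normal]

namespace IsConjCocycle

variable {k : G ⧸ N → G}

theorem map_one (hc : IsConjCocycle N k) : k 1 = 1 := by
  simpa using hc 1 1

theorem commute_of_mem (hc : IsConjCocycle N k) (q : G ⧸ N) {n : G} (hn : n ∈ N) :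
    n * k q = k q * n := by
  induction q using QuotientGroup.induction_on with | H x => ?_
  have h := hc x n
  rw [QuotientGroup.mk_mul_of_mem x hn, (QuotientGroup.eq_one_iff n).mpr hn, hc.map_one,
    mul_one] at h
  calc n * k x = n * (n⁻¹ * k x * n) := by rw [← h]
    _ = k x * n := by group

theorem map_mul_of_mem_center (hc : IsConjCocycle N k) (hZ : ∀ q, k q ∈ Subgroup.center G)
    (q r : G ⧸ N) : k (q * r) = k q * k r := by
  induction q using QuotientGroup.induction_on with | H x => ?_
  induction r using QuotientGroup.induction_on with | H y => ?_
  rw [← QuotientGroup.mk_mul, hc, mul_assoc y⁻¹, ← Subgroup.mem_center_iff.mp (hZ x) y]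
  group

end IsConjCocycle

theorem isConjCocycle_of_map_mul {k : G ⧸ N → G} (hZ : ∀ q, k q ∈ Subgroup.center G)
    (hmul : ∀ q r, k (q * r) = k q * k r) : IsConjCocycle N k := by
  intro x y
  rw [QuotientGroup.mk_mul, hmul, mul_assoc y⁻¹, ← Subgroup.mem_center_iff.mp (hZ x) y]
  group

end Cocycle

section Criterion

variable {G : Type*} [Group G] {N : Subgroup G}

def cosetMulPerm (k : G ⧸ N → G) (hk : ∀ q, k q ∈ N) : Equiv.Perm G where
  toFun x := x * k x
  invFun x := x * (k x)⁻¹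
  left_inv x := by simp [QuotientGroup.mk_mul_of_mem x (hk x)]
  right_inv x := by simp [QuotientGroup.mk_mul_of_mem x (inv_mem (hk x))]

@[simp]
theorem cosetMulPerm_apply {k : G ⧸ N → G} (hk : ∀ q, k q ∈ N) (x : G) :
    cosetMulPerm k hk x = x * k x :=
  rfl

variable [N.Normal]

theorem cosetMulPerm_mem_Wset {k : G ⧸ N → G} (hk : ∀ q, k q ∈ N) :
    cosetMulPerm k hk ∈ Wset G N :=
  ⟨1, k, hk, fun x => by simp⟩

theorem cosetMulPerm_mem_normalizer {k : G ⧸ N → G} (hk : ∀ q, k q ∈ N)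
    (hc : IsConjCocycle N k) : cosetMulPerm k hk ∈ Subgroup.normalizer (regularRep G) :=
  mem_normalizer_regularRep_iff.mpr fun x y => by
    simp only [cosetMulPerm_apply, QuotientGroup.mk_one, hc.map_one, hc x y]
    group

theorem regularRep_subset_Wset : (regularRep G : Set (Equiv.Perm G)) ⊆ Wset G N :=
  fun _ ⟨g, hg⟩ => ⟨g, fun _ => 1, fun _ => N.one_mem, fun x => by simp [hg]⟩

theorem setOf_mem_Wset_normalizer_eq_iff :
    {σ : Equiv.Perm G | σ ∈ Wset G N ∧ σ ∈ Subgroup.normalizer (regularRep G)} =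
        (regularRep G : Set (Equiv.Perm G)) ↔
      HasOnlyTrivialConjCocycles N := by
  constructor
  · intro h k hk hc
    obtain ⟨g, hg⟩ : cosetMulPerm k hk ∈ regularRep G := by
      rw [← SetLike.mem_coe, ← h]
      exact ⟨cosetMulPerm_mem_Wset hk, cosetMulPerm_mem_normalizer hk hc⟩
    have hg1 : g = 1 := by simpa [hc.map_one] using (hg 1).symm
    funext q
    induction q using QuotientGroup.induction_on with | H x => ?_
    simpa [hg1] using hg x
  · intro h
    refine Set.Subset.antisymm ?_ fun σ hσ =>
      ⟨regularRep_subset_Wset hσ, Subgroup.le_normalizer hσ⟩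
    rintro σ ⟨⟨c, f, hf, hσ⟩, hnorm⟩
    set k : G ⧸ N → G := fun q => c * (f q * (f 1)⁻¹) * c⁻¹
    have hk (q : G ⧸ N) : k q ∈ N := ‹N.Normal›.conj_mem _ (mul_mem (hf q) (inv_mem (hf 1))) c
    have hσk (x : G) : σ x = x * k x * σ 1 := by
      simp only [k, hσ, QuotientGroup.mk_one]
      group
    have hc : IsConjCocycle N k := by
      intro x y
      have e := mem_normalizer_regularRep_iff.mp hnorm x y
      rw [hσk (x * y), hσk x, hσk y] at e
      apply mul_left_cancel (a := x * y)
      apply mul_right_cancel (b := σ 1)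
      rw [e]
      group
    refine ⟨σ 1, fun x => ?_⟩
    rw [hσk x, h k hk hc, Pi.one_apply, mul_one]

end Criterion

section FiniteHoms

variable {A B : Type*}

theorem MonoidHom.eq_one_of_coprime_card_s11 [Group A] [Group B] (φ : A →* B)
    (h : (Nat.card A).Coprime (Nat.card B)) : φ = 1 := by
  ext a
  refine orderOf_eq_one_iff.mp (Nat.eq_one_of_dvd_coprimes h ?_ (orderOf_dvd_natCard (φ a)))
  exact (orderOf_map_dvd φ a).trans (orderOf_dvd_natCard a)

theorem exists_monoidHom_ne_one_of_prime_dvd_card [CommGroup A] [Finite A] [CommGroup B]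
    [Finite B] {p : ℕ} (hp : p.Prime) (hA : p ∣ Nat.card A) (hB : p ∣ Nat.card B) :
    ∃ φ : A →* B, φ ≠ 1 := by
  classical
  have : Fact p.Prime := ⟨hp⟩
  obtain ⟨b, hb⟩ := exists_prime_orderOf_dvd_card' p hB
  obtain ⟨ι, _, n, -, ⟨e⟩⟩ := CommGroup.equiv_prod_multiplicative_zmod_of_finite A
  obtain ⟨i, -, hi⟩ : ∃ i ∈ Finset.univ, p ∣ n i := by
    rw [Nat.card_congr e.toEquiv, Nat.card_pi] at hA
    simpa [Nat.card_congr Multiplicative.toAdd, Nat.card_zmod] using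
      (Prime.dvd_finsetProd_iff hp.prime _).mp hA
  let χ : A →* Multiplicative (ZMod p) :=
    ((ZMod.castHom hi (ZMod p)).toAddMonoidHom.toMultiplicative.comp
      (Pi.evalMonoidHom _ i)).comp e.toMonoidHom
  have hχ : χ (e.symm (Pi.mulSingle i (.ofAdd 1))) = .ofAdd 1 := by
    simpa [χ] using (ZMod.castHom hi (ZMod p)).map_one
  obtain ⟨ψ, hψ⟩ := IsCyclic.exists_apply_ne_one (G := Multiplicative (ZMod p))
    ⟨b, by simpa [IsPrimitiveRoot.iff_orderOf] using hb⟩ (a := .ofAdd 1) (by simp)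
  refine ⟨ψ.comp χ, fun h => hψ ?_⟩
  rw [← hχ, ← MonoidHom.comp_apply, h, MonoidHom.one_apply]

end FiniteHoms

section InnerCocycle

variable {G : Type*} [Group G] {N : Subgroup G} [N.Normal] {z : G}

def innerCocycle (hz : z ∈ Subgroup.centralizer N) : G ⧸ N → G :=
  Quotient.lift (fun x => x⁻¹ * z * x * z⁻¹) fun x y hxy => by
    obtain ⟨n, hn, rfl⟩ : ∃ n ∈ N, y = x * n :=
      ⟨x⁻¹ * y, QuotientGroup.leftRel_apply.mp hxy, by group⟩
    have hc : x⁻¹ * z * x ∈ Subgroup.centralizer N := by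
      simpa using Subgroup.Normal.conj_mem inferInstance z hz x⁻¹
    calc x⁻¹ * z * x * z⁻¹ = n⁻¹ * (n * (x⁻¹ * z * x)) * z⁻¹ := by group
      _ = (x * n)⁻¹ * z * (x * n) * z⁻¹ := by
        rw [Subgroup.mem_centralizer_iff.mp hc n hn]
        group

theorem innerCocycle_mk (hz : z ∈ Subgroup.centralizer N) (x : G) :
    innerCocycle hz x = x⁻¹ * z * x * z⁻¹ :=
  rfl

theorem innerCocycle_mem (hz : z ∈ Subgroup.centralizer N) (hzN : z ∈ N) (q : G ⧸ N) :
    innerCocycle hz q ∈ N := by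
  induction q using QuotientGroup.induction_on with | H x => ?_
  rw [innerCocycle_mk]
  exact mul_mem (by simpa using ‹N.Normal›.conj_mem z hzN x⁻¹) (inv_mem hzN)

theorem isConjCocycle_innerCocycle (hz : z ∈ Subgroup.centralizer N) :
    IsConjCocycle N (innerCocycle hz) := by
  intro x y
  simp only [innerCocycle_mk]
  group

theorem mem_center_of_innerCocycle_eq_one (hz : z ∈ Subgroup.centralizer N)
    (h : innerCocycle hz = 1) : z ∈ Subgroup.center G := by
  refine Subgroup.mem_center_iff.mpr fun x => ?_
  have hx := congrFun h ↑x⁻¹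
  rw [innerCocycle_mk, Pi.one_apply, inv_inv, mul_inv_eq_one] at hx
  calc x * z = x * z * x⁻¹ * x := by group
    _ = z * x := by rw [hx]

end InnerCocycle

section Conditions

variable {G : Type*} [Group G] {N : Subgroup G} [N.Normal]

-- for the `CommGroup` structure on `Subgroup.center N`
open scoped IsMulCommutative

theorem mem_center_of_hasOnlyTrivialConjCocycles (h : HasOnlyTrivialConjCocycles N)
    (n : N) (hn : n ∈ Subgroup.center N) : (n : G) ∈ Subgroup.center G := by
  have hz : (n : G) ∈ Subgroup.centralizer N := Subgroup.mem_centralizer_iff.mpr fun m hm =>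
    congrArg Subtype.val (Subgroup.mem_center_iff.mp hn ⟨m, hm⟩)
  exact mem_center_of_innerCocycle_eq_one hz
    (h _ (innerCocycle_mem hz n.2) (isConjCocycle_innerCocycle hz))

theorem coprime_card_of_hasOnlyTrivialConjCocycles [Finite G]
    (h : HasOnlyTrivialConjCocycles N)
    (hcen : ∀ n : N, n ∈ Subgroup.center N → (n : G) ∈ Subgroup.center G) :
    (Nat.card (Abelianization (G ⧸ N))).Coprime (Nat.card (Subgroup.center N)) := by
  by_contra hnc
  obtain ⟨p, hp, hpA, hpZ⟩ := Nat.Prime.not_coprime_iff_dvd.mp hnc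
  obtain ⟨ψ, hψ⟩ := exists_monoidHom_ne_one_of_prime_dvd_card hp hpA hpZ
  set k : G ⧸ N → G := fun q => ψ (Abelianization.of q)
  have hZ (q : G ⧸ N) : k q ∈ Subgroup.center G := hcen _ (ψ _).2
  have hk := h k (fun q => (ψ _ : N).2) (isConjCocycle_of_map_mul hZ fun q r => by simp [k])
  exact hψ (Abelianization.hom_ext _ _ (MonoidHom.ext fun q =>
    Subtype.ext (Subtype.ext (congrFun hk q))))

theorem IsConjCocycle.eq_one_of_coprime {k : G ⧸ N → G}
    (hcen : ∀ n : N, n ∈ Subgroup.center N → (n : G) ∈ Subgroup.center G)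
    (hcop : (Nat.card (Abelianization (G ⧸ N))).Coprime (Nat.card (Subgroup.center N)))
    (hk : ∀ q, k q ∈ N) (hc : IsConjCocycle N k) : k = 1 := by
  have hZN (q : G ⧸ N) : (⟨k q, hk q⟩ : N) ∈ Subgroup.center N :=
    Subgroup.mem_center_iff.mpr fun n => Subtype.ext (hc.commute_of_mem q n.2)
  have hZ (q : G ⧸ N) : k q ∈ Subgroup.center G := hcen _ (hZN q)
  let φ : G ⧸ N →* Subgroup.center N := MonoidHom.mk' (fun q => ⟨⟨k q, hk q⟩, hZN q⟩)
    fun q r => Subtype.ext (Subtype.ext (hc.map_mul_of_mem_center hZ q r))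
  have hφ := (Abelianization.lift φ).eq_one_of_coprime_card_s11 hcop
  funext q
  simpa [φ] using congrArg (fun ψ => ((ψ (Abelianization.of q) : N) : G)) hφ

end Conditions

/-- The right regular representation `Ĝ` equals its own normalizer in
`W(G,N)` iff `Z(N) ≤ Z(G)` and the order of the abelianization of `G/N` is relatively
prime to `|Z(N)|`. -/
theorem regularRep_selfNormalizing_in_Wset_iff {G : Type*} [Group G] [Fintype G]
    (N : Subgroup G) [N.Normal] :
    ({σ : Equiv.Perm G | σ ∈ Wset G N ∧ σ ∈ Subgroup.normalizer (regularRep G)} =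
        (↑(regularRep G) : Set (Equiv.Perm G))) ↔
      ((∀ n : ↥N, n ∈ Subgroup.center ↥N → (n : G) ∈ Subgroup.center G) ∧
        Nat.Coprime (Nat.card (Abelianization (G ⧸ N)))
          (Nat.card ↥(Subgroup.center ↥N))) := by
  rw [setOf_mem_Wset_normalizer_eq_iff]
  refine ⟨fun h => ?_, fun ⟨hcen, hcop⟩ _ hk hc => hc.eq_one_of_coprime hcen hcop hk⟩
  have hcen := mem_center_of_hasOnlyTrivialConjCocycles h
  exact ⟨hcen, coprime_card_of_hasOnlyTrivialConjCocycles h hcen⟩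
end
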